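/- arXiv:1302.0144 — 12 statements merged into one kernel-verified Lean document; each statement's English description precedes it below -/
import Mathlib

section
/- If U and V are matricially coupled (i.e., there exists an invertible operator Û = [[U₁₁, U₁₂],[U₂₁, U₂₂]] on X ⊕ Y with inverse [[V₁₁, V₁₂],[V₂₁, V₂₂]] such that U = U₁₁ and V = V₂₂), then U and V are equivalent after extension: the operators E = [[U₁₂, U],[U₂₂, U₂₁]] and F = [[-U₂₁, I_Y],[V₁₁U, V₁₂]] are invertible with inverses E⁻¹ = [[V₂₁, V],[V₁₁, V₁₂]] and F⁻¹ = [[-V₁₂, I_X],[U₂₂V, U₂₁]], and [[U,0],[0,I_Y]] = E [[V,0],[0,I_X]] F. -/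
open ContinuousLinearMap

/-- 2×2 block operator matrix `[[A, B],[C, D]] : X ⊕ Y → X' ⊕ Y'`. -/
noncomputable def blk {X Y X' Y' : Type*} [NormedAddCommGroup X] [NormedSpace ℝ X]
    [NormedAddCommGroup Y] [NormedSpace ℝ Y] [NormedAddCommGroup X'] [NormedSpace ℝ X']
    [NormedAddCommGroup Y'] [NormedSpace ℝ Y']
    (A : X →L[ℝ] X') (B : Y →L[ℝ] X') (C : X →L[ℝ] Y') (D : Y →L[ℝ] Y') :
    (X × Y) →L[ℝ] (X' × Y') :=
  (A.coprod B).prod (C.coprod D)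

section blocks
variable {X Y X' Y' : Type*} [NormedAddCommGroup X] [NormedSpace ℝ X]
    [NormedAddCommGroup Y] [NormedSpace ℝ Y] [NormedAddCommGroup X'] [NormedSpace ℝ X']
    [NormedAddCommGroup Y'] [NormedSpace ℝ Y']

/-- (1,1)-entry of a block operator. -/
noncomputable def b11 (T : (X × Y) →L[ℝ] (X' × Y')) : X →L[ℝ] X' :=
  (ContinuousLinearMap.fst ℝ X' Y').comp (T.comp (ContinuousLinearMap.inl ℝ X Y))

/-- (1,2)-entry of a block operator. -/
noncomputable def b12 (T : (X × Y) →L[ℝ] (X' × Y')) : Y →L[ℝ] X' :=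
  (ContinuousLinearMap.fst ℝ X' Y').comp (T.comp (ContinuousLinearMap.inr ℝ X Y))

/-- (2,1)-entry of a block operator. -/
noncomputable def b21 (T : (X × Y) →L[ℝ] (X' × Y')) : X →L[ℝ] Y' :=
  (ContinuousLinearMap.snd ℝ X' Y').comp (T.comp (ContinuousLinearMap.inl ℝ X Y))

/-- (2,2)-entry of a block operator. -/
noncomputable def b22 (T : (X × Y) →L[ℝ] (X' × Y')) : Y →L[ℝ] Y' :=
  (ContinuousLinearMap.snd ℝ X' Y').comp (T.comp (ContinuousLinearMap.inr ℝ X Y))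

end blocks

lemma blk_apply {X Y X' Y' : Type*} [NormedAddCommGroup X] [NormedSpace ℝ X]
    [NormedAddCommGroup Y] [NormedSpace ℝ Y] [NormedAddCommGroup X'] [NormedSpace ℝ X']
    [NormedAddCommGroup Y'] [NormedSpace ℝ Y']
    (A : X →L[ℝ] X') (B : Y →L[ℝ] X') (C : X →L[ℝ] Y') (D : Y →L[ℝ] Y') (x : X) (y : Y) :
    blk A B C D (x, y) = (A x + B y, C x + D y) := rfl

/-- Matricial coupling implies equivalence after extension, with explicit formulas. -/
theorem stmt0 {X Y : Type*} [NormedAddCommGroup X] [NormedSpace ℝ X] [CompleteSpace X]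
    [NormedAddCommGroup Y] [NormedSpace ℝ Y] [CompleteSpace Y]
    (U : X →L[ℝ] X) (V : Y →L[ℝ] Y)
    (U12 : Y →L[ℝ] X) (U21 : X →L[ℝ] Y) (U22 : Y →L[ℝ] Y)
    (V11 : X →L[ℝ] X) (V12 : Y →L[ℝ] X) (V21 : X →L[ℝ] Y)
    (hMC1 : (blk U U12 U21 U22).comp (blk V11 V12 V21 V) = ContinuousLinearMap.id ℝ (X × Y))
    (hMC2 : (blk V11 V12 V21 V).comp (blk U U12 U21 U22) = ContinuousLinearMap.id ℝ (X × Y))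
    (E : (Y × X) →L[ℝ] (X × Y)) (hE : E = blk U12 U U22 U21)
    (F : (X × Y) →L[ℝ] (Y × X)) (hF : F = blk (-U21) (ContinuousLinearMap.id ℝ Y) (V11.comp U) V12)
    (E' : (X × Y) →L[ℝ] (Y × X)) (hE' : E' = blk V21 V V11 V12)
    (F' : (Y × X) →L[ℝ] (X × Y)) (hF' : F' = blk (-V12) (ContinuousLinearMap.id ℝ X) (U22.comp V) U21) :
    E.comp E' = ContinuousLinearMap.id ℝ (X × Y) ∧
    E'.comp E = ContinuousLinearMap.id ℝ (Y × X) ∧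
    F.comp F' = ContinuousLinearMap.id ℝ (Y × X) ∧
    F'.comp F = ContinuousLinearMap.id ℝ (X × Y) ∧
    blk U 0 0 (ContinuousLinearMap.id ℝ Y) =
      E.comp ((blk V 0 0 (ContinuousLinearMap.id ℝ X)).comp F) := by
  subst hE hF hE' hF'
  have A1 : ∀ x : X, U (V11 x) = x - U12 (V21 x) := by
    intro x
    have := congrArg (fun T => (T (x, 0)).1) hMC1
    simp [blk_apply, map_zero] at this
    exact eq_sub_of_add_eq this
  have A2 : ∀ x : X, U22 (V21 x) = -U21 (V11 x) := by
    intro x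
    have := congrArg (fun T => (T (x, 0)).2) hMC1
    simp [blk_apply, map_zero] at this
    exact eq_neg_of_add_eq_zero_right this
  have A3 : ∀ y : Y, U (V12 y) = -U12 (V y) := by
    intro y
    have := congrArg (fun T => (T ((0 : X), y)).1) hMC1
    simp [blk_apply, map_zero] at this
    exact eq_neg_of_add_eq_zero_left this
  have A4 : ∀ y : Y, U22 (V y) = y - U21 (V12 y) := by
    intro y
    have := congrArg (fun T => (T ((0 : X), y)).2) hMC1
    simp [blk_apply, map_zero] at this
    rw [add_comm] at this
    exact eq_sub_of_add_eq this
  have B1 : ∀ x : X, V11 (U x) = x - V12 (U21 x) := by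
    intro x
    have := congrArg (fun T => (T (x, 0)).1) hMC2
    simp [blk_apply, map_zero] at this
    exact eq_sub_of_add_eq this
  have B2 : ∀ x : X, V (U21 x) = -V21 (U x) := by
    intro x
    have := congrArg (fun T => (T (x, 0)).2) hMC2
    simp [blk_apply, map_zero] at this
    exact eq_neg_of_add_eq_zero_right this
  have B3 : ∀ y : Y, V11 (U12 y) = -V12 (U22 y) := by
    intro y
    have := congrArg (fun T => (T ((0 : X), y)).1) hMC2
    simp [blk_apply, map_zero] at this
    exact eq_neg_of_add_eq_zero_left this
  have B4 : ∀ y : Y, V (U22 y) = y - V21 (U12 y) := by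
    intro y
    have := congrArg (fun T => (T ((0 : X), y)).2) hMC2
    simp [blk_apply, map_zero] at this
    rw [add_comm] at this
    exact eq_sub_of_add_eq this
  refine ⟨?_, ?_, ?_, ?_, ?_⟩ <;>
    refine ContinuousLinearMap.ext fun p => ?_ <;>
    obtain ⟨x, y⟩ := p <;>
    refine Prod.ext ?_ ?_ <;>
    simp [blk_apply, map_add, map_sub, map_neg, A1, A2, A3, A4, B1, B2, B3, B4] <;>
    abel
end

section
/- If U and V are Schur coupled via S = [[A,B],[C,D]] on X ⊕ Y with A, D invertible, U = A - B D⁻¹ C and V = D - C A⁻¹ B, then the operators E = [[-BD⁻¹, U],[D⁻¹, D⁻¹C]] and F = [[-D⁻¹C, I],[A⁻¹U, A⁻¹B]] are invertible with inverses E⁻¹ = [[-CA⁻¹, V],[A⁻¹, A⁻¹B]] and F⁻¹ = [[-A⁻¹B, I_X],[D⁻¹V, D⁻¹C]], and [[U,0],[0,I_Y]] = E [[V,0],[0,I_X]] F; in particular U and V are equivalent after extension. -/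
open ContinuousLinearMap

/-- Schur coupling implies equivalence after extension, with explicit formulas. -/
theorem stmt2 {X Y : Type*} [NormedAddCommGroup X] [NormedSpace ℝ X] [CompleteSpace X]
    [NormedAddCommGroup Y] [NormedSpace ℝ Y] [CompleteSpace Y]
    (U : X →L[ℝ] X) (V : Y →L[ℝ] Y)
    (A : X →L[ℝ] X) (B : Y →L[ℝ] X) (C : X →L[ℝ] Y) (D : Y →L[ℝ] Y)
    (A' : X →L[ℝ] X) (hA1 : A.comp A' = ContinuousLinearMap.id ℝ X)
    (hA2 : A'.comp A = ContinuousLinearMap.id ℝ X)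
    (D' : Y →L[ℝ] Y) (hD1 : D.comp D' = ContinuousLinearMap.id ℝ Y)
    (hD2 : D'.comp D = ContinuousLinearMap.id ℝ Y)
    (hU : U = A - B.comp (D'.comp C)) (hV : V = D - C.comp (A'.comp B))
    (E : (Y × X) →L[ℝ] (X × Y)) (hE : E = blk (-(B.comp D')) U D' (D'.comp C))
    (F : (X × Y) →L[ℝ] (Y × X))
    (hF : F = blk (-(D'.comp C)) (ContinuousLinearMap.id ℝ Y) (A'.comp U) (A'.comp B))
    (E' : (X × Y) →L[ℝ] (Y × X)) (hE' : E' = blk (-(C.comp A')) V A' (A'.comp B))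
    (F' : (Y × X) →L[ℝ] (X × Y))
    (hF' : F' = blk (-(A'.comp B)) (ContinuousLinearMap.id ℝ X) (D'.comp V) (D'.comp C)) :
    E.comp E' = ContinuousLinearMap.id ℝ (X × Y) ∧
    E'.comp E = ContinuousLinearMap.id ℝ (Y × X) ∧
    F.comp F' = ContinuousLinearMap.id ℝ (Y × X) ∧
    F'.comp F = ContinuousLinearMap.id ℝ (X × Y) ∧
    blk U 0 0 (ContinuousLinearMap.id ℝ Y) =
      E.comp ((blk V 0 0 (ContinuousLinearMap.id ℝ X)).comp F) := by
  have ha1 : ∀ x, A (A' x) = x := fun x => by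
    have := ContinuousLinearMap.ext_iff.mp hA1 x; simpa using this
  have ha2 : ∀ x, A' (A x) = x := fun x => by
    have := ContinuousLinearMap.ext_iff.mp hA2 x; simpa using this
  have hd1 : ∀ y, D (D' y) = y := fun y => by
    have := ContinuousLinearMap.ext_iff.mp hD1 y; simpa using this
  have hd2 : ∀ y, D' (D y) = y := fun y => by
    have := ContinuousLinearMap.ext_iff.mp hD2 y; simpa using this
  subst hU hV hE hE' hF hF'
  refine ⟨?_, ?_, ?_, ?_, ?_⟩ <;>
  · apply ContinuousLinearMap.ext
    rintro ⟨x, y⟩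
    refine Prod.ext ?_ ?_ <;>
      simp [blk, ha1, ha2, hd1, hd2, sub_apply, add_apply, comp_apply] <;> abel
end

section
/- If U and V are Schur coupled via S = [[A,B],[C,D]] with A and D invertible, then the block operator Û = [[U, -BD⁻¹],[D⁻¹C, D⁻¹]] on X ⊕ Y is invertible with inverse [[A⁻¹, A⁻¹B],[-CA⁻¹, V]]; in particular U and V are matricially coupled, and moreover strongly matricially coupled (the (2,2)-entry D⁻¹ of Û and the (1,1)-entry A⁻¹ of Û⁻¹ are invertible). -/
open ContinuousLinearMap

/-- Schur coupling implies (strong) matricial coupling, with explicit formulas. -/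
theorem stmt3 {X Y : Type*} [NormedAddCommGroup X] [NormedSpace ℝ X] [CompleteSpace X]
    [NormedAddCommGroup Y] [NormedSpace ℝ Y] [CompleteSpace Y]
    (U : X →L[ℝ] X) (V : Y →L[ℝ] Y)
    (A : X →L[ℝ] X) (B : Y →L[ℝ] X) (C : X →L[ℝ] Y) (D : Y →L[ℝ] Y)
    (A' : X →L[ℝ] X) (hA1 : A.comp A' = ContinuousLinearMap.id ℝ X)
    (hA2 : A'.comp A = ContinuousLinearMap.id ℝ X)
    (D' : Y →L[ℝ] Y) (hD1 : D.comp D' = ContinuousLinearMap.id ℝ Y)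
    (hD2 : D'.comp D = ContinuousLinearMap.id ℝ Y)
    (hU : U = A - B.comp (D'.comp C)) (hV : V = D - C.comp (A'.comp B))
    (Uh : (X × Y) →L[ℝ] (X × Y)) (hUh : Uh = blk U (-(B.comp D')) (D'.comp C) D')
    (Uhinv : (X × Y) →L[ℝ] (X × Y)) (hUhinv : Uhinv = blk A' (A'.comp B) (-(C.comp A')) V) :
    Uh.comp Uhinv = ContinuousLinearMap.id ℝ (X × Y) ∧
    Uhinv.comp Uh = ContinuousLinearMap.id ℝ (X × Y) ∧
    (∃ G : Y →L[ℝ] Y, (b22 Uh).comp G = ContinuousLinearMap.id ℝ Y ∧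
      G.comp (b22 Uh) = ContinuousLinearMap.id ℝ Y) ∧
    (∃ G : X →L[ℝ] X, (b11 Uhinv).comp G = ContinuousLinearMap.id ℝ X ∧
      G.comp (b11 Uhinv) = ContinuousLinearMap.id ℝ X) := by
  have hA1' : ∀ x, A (A' x) = x := fun x => ContinuousLinearMap.ext_iff.mp hA1 x
  have hA2' : ∀ x, A' (A x) = x := fun x => ContinuousLinearMap.ext_iff.mp hA2 x
  have hD1' : ∀ y, D (D' y) = y := fun y => ContinuousLinearMap.ext_iff.mp hD1 y
  have hD2' : ∀ y, D' (D y) = y := fun y => ContinuousLinearMap.ext_iff.mp hD2 y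
  subst hU hV hUh hUhinv
  refine ⟨?_, ?_, ⟨D, ?_, ?_⟩, ⟨A, ?_, ?_⟩⟩
  · ext z <;> simp [blk, hA1', hA2', hD1', hD2']
  · ext z <;> simp [blk, hA1', hA2', hD1', hD2']
  · ext y; simp [b22, blk, hD2']
  · ext y; simp [b22, blk, hD1']
  · ext x; simp [b11, blk, hA2']
  · ext x; simp [b11, blk, hA1']
end

section
/- If U on X and V on Y are strongly matricially coupled, i.e., matricially coupled via Û = [[U, U₁₂],[U₂₁, U₂₂]] with inverse [[V₁₁, V₁₂],[V₂₁, V]] such that U₂₂ and V₁₁ are invertible, then U and V are Schur coupled: setting A = U - U₁₂U₂₂⁻¹U₂₁, B = -U₁₂U₂₂⁻¹, C = U₂₂⁻¹U₂₁, D = U₂₂⁻¹, the operators A and D are invertible, U = A - BD⁻¹C, and V = D - CA⁻¹B. -/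
open ContinuousLinearMap

/-- Strong matricial coupling implies Schur coupling, with explicit formulas. -/
theorem stmt4 {X Y : Type*} [NormedAddCommGroup X] [NormedSpace ℝ X] [CompleteSpace X]
    [NormedAddCommGroup Y] [NormedSpace ℝ Y] [CompleteSpace Y]
    (U : X →L[ℝ] X) (V : Y →L[ℝ] Y)
    (U12 : Y →L[ℝ] X) (U21 : X →L[ℝ] Y) (U22 : Y →L[ℝ] Y)
    (V11 : X →L[ℝ] X) (V12 : Y →L[ℝ] X) (V21 : X →L[ℝ] Y)
    (hMC1 : (blk U U12 U21 U22).comp (blk V11 V12 V21 V) = ContinuousLinearMap.id ℝ (X × Y))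
    (hMC2 : (blk V11 V12 V21 V).comp (blk U U12 U21 U22) = ContinuousLinearMap.id ℝ (X × Y))
    (U22' : Y →L[ℝ] Y) (hU22'1 : U22.comp U22' = ContinuousLinearMap.id ℝ Y)
    (hU22'2 : U22'.comp U22 = ContinuousLinearMap.id ℝ Y)
    (V11' : X →L[ℝ] X) (hV11'1 : V11.comp V11' = ContinuousLinearMap.id ℝ X)
    (hV11'2 : V11'.comp V11 = ContinuousLinearMap.id ℝ X)
    (A : X →L[ℝ] X) (hA : A = U - U12.comp (U22'.comp U21))
    (B : Y →L[ℝ] X) (hB : B = -(U12.comp U22'))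
    (C : X →L[ℝ] Y) (hC : C = U22'.comp U21)
    (D : Y →L[ℝ] Y) (hD : D = U22') :
    (∃ A' : X →L[ℝ] X, A.comp A' = ContinuousLinearMap.id ℝ X ∧
      A'.comp A = ContinuousLinearMap.id ℝ X ∧ V = D - C.comp (A'.comp B)) ∧
    (∃ D' : Y →L[ℝ] Y, D.comp D' = ContinuousLinearMap.id ℝ Y ∧
      D'.comp D = ContinuousLinearMap.id ℝ Y ∧ U = A - B.comp (D'.comp C)) := by
  have hu1 : ∀ y, U22 (U22' y) = y := fun y => by
    simpa using DFunLike.congr_fun hU22'1 y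
  have hu2 : ∀ y, U22' (U22 y) = y := fun y => by
    simpa using DFunLike.congr_fun hU22'2 y
  have h1 : ∀ x, U (V11 x) + U12 (V21 x) = x := fun x => by
    have := DFunLike.congr_fun hMC1 (x, 0)
    simp [blk] at this
    exact this.1
  have h3 : ∀ x, U21 (V11 x) + U22 (V21 x) = 0 := fun x => by
    have := DFunLike.congr_fun hMC1 (x, 0)
    simp [blk] at this
    exact this.2
  have k1 : ∀ x, V11 (U x) + V12 (U21 x) = x := fun x => by
    have := DFunLike.congr_fun hMC2 (x, 0)
    simp [blk] at this
    exact this.1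
  have k2 : ∀ y, V11 (U12 y) + V12 (U22 y) = 0 := fun y => by
    have := DFunLike.congr_fun hMC2 (0, y)
    simp [blk] at this
    exact this.1
  have k4 : ∀ y, V21 (U12 y) + V (U22 y) = y := fun y => by
    have := DFunLike.congr_fun hMC2 (0, y)
    simp [blk] at this
    exact this.2
  have e3 : ∀ x, U21 (V11 x) = -(U22 (V21 x)) := fun x =>
    eq_neg_of_add_eq_zero_left (h3 x)
  constructor
  · refine ⟨V11, ?_, ?_, ?_⟩
    · ext x
      simp [hA, e3 x, hu2, sub_neg_eq_add, h1 x]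
    · ext x
      have e2 : V11 (U12 (U22' (U21 x))) = -(V12 (U21 x)) := by
        have := k2 (U22' (U21 x))
        rw [hu1] at this
        exact eq_neg_of_add_eq_zero_left this
      simp [hA, e2, sub_neg_eq_add, k1 x]
    · ext y
      have e4 : V21 (U12 (U22' y)) = U22' y - V y := by
        have := k4 (U22' y)
        rw [hu1] at this
        exact eq_sub_of_add_eq this
      have key : U22' (U21 (V11 (U12 (U22' y)))) = V y - U22' y := by
        rw [e3 (U12 (U22' y))]
        simp [hu2, e4]
      simp [hD, hC, hB, key]
  · refine ⟨U22, ?_, ?_, ?_⟩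
    · ext y; simp [hD, hu2]
    · ext y; simp [hD, hu1]
    · ext x
      simp [hA, hB, hC, hu1]
end

section
/- Suppose U on X and V on Y are equivalent after extension via E and F and, with respect to the block decompositions of E, F, E⁻¹, F⁻¹, the operators E₂₁ : Y → X₀ and F₁₂ : X₀ → Y are invertible (strong equivalence after extension). Then the blocks E₂₁⁽⁻¹⁾ of E⁻¹ and F₁₂⁽⁻¹⁾ of F⁻¹ are invertible, with inverses (E₂₁⁽⁻¹⁾)⁻¹ = E₁₂ - E₁₁E₂₁⁻¹E₂₂ and (F₁₂⁽⁻¹⁾)⁻¹ = F₂₁ - F₂₂F₁₂⁻¹F₁₁. -/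
open ContinuousLinearMap

theorem aux6 {X Y X₀ Y₀ : Type*} [NormedAddCommGroup X] [NormedSpace ℝ X]
    [NormedAddCommGroup Y] [NormedSpace ℝ Y]
    [NormedAddCommGroup X₀] [NormedSpace ℝ X₀]
    [NormedAddCommGroup Y₀] [NormedSpace ℝ Y₀]
    (E : (Y × Y₀) →L[ℝ] (X × X₀)) (Einv : (X × X₀) →L[ℝ] (Y × Y₀))
    (hE1 : E.comp Einv = ContinuousLinearMap.id ℝ (X × X₀))
    (hE2 : Einv.comp E = ContinuousLinearMap.id ℝ (Y × Y₀))
    (G : X₀ →L[ℝ] Y) (hG1 : (b21 E).comp G = ContinuousLinearMap.id ℝ X₀)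
    (hG2 : G.comp (b21 E) = ContinuousLinearMap.id ℝ Y) :
    (b21 Einv).comp (b12 E - (b11 E).comp (G.comp (b22 E))) = ContinuousLinearMap.id ℝ Y₀ ∧
      (b12 E - (b11 E).comp (G.comp (b22 E))).comp (b21 Einv) = ContinuousLinearMap.id ℝ X := by
  have hE1' : ∀ p, E (Einv p) = p := fun p => DFunLike.congr_fun hE1 p
  have hE2' : ∀ p, Einv (E p) = p := fun p => DFunLike.congr_fun hE2 p
  have hG1' : ∀ x₀, (E (G x₀, 0)).2 = x₀ := by
    intro x₀
    have := DFunLike.congr_fun hG1 x₀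
    simpa [b21] using this
  have hG2' : ∀ y, G ((E (y, 0)).2) = y := by
    intro y
    have := DFunLike.congr_fun hG2 y
    simpa [b21] using this
  constructor
  · ext a
    show (Einv ((E (0, a)).1 - (E (G ((E (0, a)).2), 0)).1, 0)).2 = a
    have key : ((E (0, a)).1 - (E (G ((E (0, a)).2), 0)).1, (0 : X₀))
        = E (0, a) - E (G ((E (0, a)).2), 0) := by
      have h2 := hG1' ((E (0, a)).2)
      exact Prod.ext rfl (by simp [h2])
    rw [key, map_sub, hE2', hE2']
    simp
  · ext x
    show (E (0, (Einv (x, 0)).2)).1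
        - (E (G ((E (0, (Einv (x, 0)).2)).2), 0)).1 = x
    set p := Einv (x, 0) with hp
    have hEp : E p = (x, 0) := hE1' _
    have hE0r : E (0, p.2) = (x, 0) - E (p.1, 0) := by
      have : ((0 : Y), p.2) = p - (p.1, 0) := by
        exact Prod.ext (by simp) (by simp)
      rw [this, map_sub, hEp]
    have hg : G ((E (0, p.2)).2) = -p.1 := by
      have h2 : (E (0, p.2)).2 = -(E (p.1, 0)).2 := by rw [hE0r]; simp
      rw [h2, map_neg, hG2']
    have hneg : E ((-p.1 : Y), 0) = -E (p.1, 0) := by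
      have : ((-p.1 : Y), (0 : Y₀)) = -(p.1, 0) := by simp
      rw [this, map_neg]
    rw [hg, hE0r, hneg]
    simp
/-- Under strong equivalence after extension, the blocks `E₂₁⁽⁻¹⁾` of `E⁻¹` and `F₁₂⁽⁻¹⁾` of
`F⁻¹` are invertible, with explicit inverses. -/
theorem stmt6 {X Y X₀ Y₀ : Type*} [NormedAddCommGroup X] [NormedSpace ℝ X] [CompleteSpace X]
    [NormedAddCommGroup Y] [NormedSpace ℝ Y] [CompleteSpace Y]
    [NormedAddCommGroup X₀] [NormedSpace ℝ X₀] [CompleteSpace X₀]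
    [NormedAddCommGroup Y₀] [NormedSpace ℝ Y₀] [CompleteSpace Y₀]
    (U : X →L[ℝ] X) (V : Y →L[ℝ] Y)
    (E : (Y × Y₀) →L[ℝ] (X × X₀)) (Einv : (X × X₀) →L[ℝ] (Y × Y₀))
    (F : (X × X₀) →L[ℝ] (Y × Y₀)) (Finv : (Y × Y₀) →L[ℝ] (X × X₀))
    (hE1 : E.comp Einv = ContinuousLinearMap.id ℝ (X × X₀))
    (hE2 : Einv.comp E = ContinuousLinearMap.id ℝ (Y × Y₀))
    (hF1 : F.comp Finv = ContinuousLinearMap.id ℝ (Y × Y₀))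
    (hF2 : Finv.comp F = ContinuousLinearMap.id ℝ (X × X₀))
    (hEq : blk U 0 0 (ContinuousLinearMap.id ℝ X₀) =
      E.comp ((blk V 0 0 (ContinuousLinearMap.id ℝ Y₀)).comp F))
    -- E₂₁ : Y → X₀ is invertible with inverse G
    (G : X₀ →L[ℝ] Y) (hG1 : (b21 E).comp G = ContinuousLinearMap.id ℝ X₀)
    (hG2 : G.comp (b21 E) = ContinuousLinearMap.id ℝ Y)
    -- F₁₂ : X₀ → Y is invertible with inverse Hm
    (Hm : Y →L[ℝ] X₀) (hH1 : (b12 F).comp Hm = ContinuousLinearMap.id ℝ Y)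
    (hH2 : Hm.comp (b12 F) = ContinuousLinearMap.id ℝ X₀) :
    ((b21 Einv).comp (b12 E - (b11 E).comp (G.comp (b22 E))) = ContinuousLinearMap.id ℝ Y₀ ∧
      (b12 E - (b11 E).comp (G.comp (b22 E))).comp (b21 Einv) = ContinuousLinearMap.id ℝ X) ∧
    ((b12 Finv).comp (b21 F - (b22 F).comp (Hm.comp (b11 F))) = ContinuousLinearMap.id ℝ X ∧
      (b21 F - (b22 F).comp (Hm.comp (b11 F))).comp (b12 Finv) = ContinuousLinearMap.id ℝ Y₀) := by
  refine ⟨aux6 E Einv hE1 hE2 G hG1 hG2, ?_⟩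
  -- swap coordinates to reduce the F-part to `aux6`
  let sX : (X₀ × X) →L[ℝ] (X × X₀) := (ContinuousLinearEquiv.prodComm ℝ X₀ X : _ ≃L[ℝ] _)
  let sX' : (X × X₀) →L[ℝ] (X₀ × X) := (ContinuousLinearEquiv.prodComm ℝ X X₀ : _ ≃L[ℝ] _)
  let sY : (Y × Y₀) →L[ℝ] (Y₀ × Y) := (ContinuousLinearEquiv.prodComm ℝ Y Y₀ : _ ≃L[ℝ] _)
  let sY' : (Y₀ × Y) →L[ℝ] (Y × Y₀) := (ContinuousLinearEquiv.prodComm ℝ Y₀ Y : _ ≃L[ℝ] _)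
  let T : (X₀ × X) →L[ℝ] (Y₀ × Y) := sY.comp (F.comp sX)
  let Tinv : (Y₀ × Y) →L[ℝ] (X₀ × X) := sX'.comp (Finv.comp sY')
  have hF1' : ∀ p, F (Finv p) = p := fun p => DFunLike.congr_fun hF1 p
  have hF2' : ∀ p, Finv (F p) = p := fun p => DFunLike.congr_fun hF2 p
  have hT1 : T.comp Tinv = ContinuousLinearMap.id ℝ (Y₀ × Y) := by
    ext p <;> simp [T, Tinv, sX, sX', sY, sY', hF1']
  have hT2 : Tinv.comp T = ContinuousLinearMap.id ℝ (X₀ × X) := by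
    ext p <;> simp [T, Tinv, sX, sX', sY, sY', hF2']
  have hb21T : b21 T = b12 F := by ext x; rfl
  have hb11T : b11 T = b22 F := by ext x; simp [T, sX, sY, b11, b22]
  have hb22T : b22 T = b11 F := by ext x; simp [T, sX, sY, b22, b11]
  have hb12T : b12 T = b21 F := by ext x; rfl
  have hb21Tinv : b21 Tinv = b12 Finv := by ext x; rfl
  have h := aux6 T Tinv hT1 hT2 Hm (by rw [hb21T]; exact hH1) (by rw [hb21T]; exact hH2)
  rw [hb21Tinv, hb12T, hb11T, hb22T] at h
  exact h
end

section
/- If U on X and V on Y are equivalent after extension, then they are equivalent after extension with extension spaces X₀ = Y and Y₀ = X via operators E : Y ⊕ X → X ⊕ Y and F : X ⊕ Y → Y ⊕ X such that the (1,2)-block of F is I_Y, the (1,2)-block of F⁻¹ is I_X, the (1,2)-block of E is U, and the (1,2)-block of E⁻¹ is V. -/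
/-!
Equivalence after extension yields a matricial coupling: writing `Eᵢⱼ, Fᵢⱼ` for the blocks of
`E, F` and `eᵢⱼ, fᵢⱼ` for those of their inverses, `[[U, E₁₁], [-F₁₁, F₁₂E₂₁]]` has inverse
`[[f₁₂e₂₁, -f₁₁], [e₁₁, V]]`. Conversely, a coupling `[[U, K], [L, M]]⁻¹ = [[A, B], [C, V]]` gives
`U ⊕ I_Y = [[K, U], [M, L]] (V ⊕ I_X) [[-L, I], [AU, B]]`, where the outer factors have inverses
`[[C, V], [A, B]]` and `[[-B, I], [MV, L]]`.
-/

open ContinuousLinearMap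

section BlockAlgebra

variable {X Y X' Y' X'' Y'' : Type*} [NormedAddCommGroup X] [NormedSpace ℝ X]
  [NormedAddCommGroup Y] [NormedSpace ℝ Y] [NormedAddCommGroup X'] [NormedSpace ℝ X']
  [NormedAddCommGroup Y'] [NormedSpace ℝ Y'] [NormedAddCommGroup X''] [NormedSpace ℝ X'']
  [NormedAddCommGroup Y''] [NormedSpace ℝ Y'']

theorem blk_comp_blk (A : X' →L[ℝ] X'') (B : Y' →L[ℝ] X'') (C : X' →L[ℝ] Y'') (D : Y' →L[ℝ] Y'')
    (A' : X →L[ℝ] X') (B' : Y →L[ℝ] X') (C' : X →L[ℝ] Y') (D' : Y →L[ℝ] Y') :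
    blk A B C D ∘L blk A' B' C' D' =
      blk (A ∘L A' + B ∘L C') (A ∘L B' + B ∘L D') (C ∘L A' + D ∘L C') (C ∘L B' + D ∘L D') := by
  ext <;> simp [blk]

theorem blk_id_zero_zero_id : blk (.id ℝ X) 0 0 (.id ℝ Y) = .id ℝ (X × Y) := by
  ext <;> simp [blk]

@[simp] theorem b11_blk (A : X →L[ℝ] X') (B : Y →L[ℝ] X') (C : X →L[ℝ] Y') (D : Y →L[ℝ] Y') :
    b11 (blk A B C D) = A := by ext; simp [b11, blk]

@[simp] theorem b12_blk (A : X →L[ℝ] X') (B : Y →L[ℝ] X') (C : X →L[ℝ] Y') (D : Y →L[ℝ] Y') :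
    b12 (blk A B C D) = B := by ext; simp [b12, blk]

@[simp] theorem b21_blk (A : X →L[ℝ] X') (B : Y →L[ℝ] X') (C : X →L[ℝ] Y') (D : Y →L[ℝ] Y') :
    b21 (blk A B C D) = C := by ext; simp [b21, blk]

@[simp] theorem b22_blk (A : X →L[ℝ] X') (B : Y →L[ℝ] X') (C : X →L[ℝ] Y') (D : Y →L[ℝ] Y') :
    b22 (blk A B C D) = D := by ext; simp [b22, blk]

theorem blk_blocks (T : (X × Y) →L[ℝ] (X' × Y')) : blk (b11 T) (b12 T) (b21 T) (b22 T) = T := by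
  ext p <;> simp [blk, b11, b12, b21, b22, ← Prod.fst_add, ← Prod.snd_add, ← map_add]

@[simp] theorem b11_id : b11 (.id ℝ (X × Y)) = .id ℝ X := by
  rw [← blk_id_zero_zero_id, b11_blk]

@[simp] theorem b12_id : b12 (.id ℝ (X × Y)) = 0 := by
  rw [← blk_id_zero_zero_id, b12_blk]

@[simp] theorem b21_id : b21 (.id ℝ (X × Y)) = 0 := by
  rw [← blk_id_zero_zero_id, b21_blk]

@[simp] theorem b22_id : b22 (.id ℝ (X × Y)) = .id ℝ Y := by
  rw [← blk_id_zero_zero_id, b22_blk]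

variable (S : (X' × Y') →L[ℝ] (X'' × Y'')) (T : (X × Y) →L[ℝ] (X' × Y'))

@[simp] theorem b11_comp : b11 (S ∘L T) = b11 S ∘L b11 T + b12 S ∘L b21 T := by
  rw [← blk_blocks S, ← blk_blocks T, blk_comp_blk]; simp

@[simp] theorem b12_comp : b12 (S ∘L T) = b11 S ∘L b12 T + b12 S ∘L b22 T := by
  rw [← blk_blocks S, ← blk_blocks T, blk_comp_blk]; simp

@[simp] theorem b21_comp : b21 (S ∘L T) = b21 S ∘L b11 T + b22 S ∘L b21 T := by
  rw [← blk_blocks S, ← blk_blocks T, blk_comp_blk]; simp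

@[simp] theorem b22_comp : b22 (S ∘L T) = b21 S ∘L b12 T + b22 S ∘L b22 T := by
  rw [← blk_blocks S, ← blk_blocks T, blk_comp_blk]; simp

end BlockAlgebra

section Coupling

variable {X Y : Type*} [NormedAddCommGroup X] [NormedSpace ℝ X]
  [NormedAddCommGroup Y] [NormedSpace ℝ Y]

structure IsMatricialCoupling (U : X →L[ℝ] X) (K : Y →L[ℝ] X) (L : X →L[ℝ] Y) (M : Y →L[ℝ] Y)
    (A : X →L[ℝ] X) (B : Y →L[ℝ] X) (C : X →L[ℝ] Y) (V : Y →L[ℝ] Y) : Prop where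
  comp_eq_id : blk U K L M ∘L blk A B C V = .id ℝ (X × Y)
  comp_eq_id' : blk A B C V ∘L blk U K L M = .id ℝ (X × Y)

variable {X₀ Y₀ : Type*} [NormedAddCommGroup X₀] [NormedSpace ℝ X₀]
  [NormedAddCommGroup Y₀] [NormedSpace ℝ Y₀]
  {U : X →L[ℝ] X} {V : Y →L[ℝ] Y}
  {E : (Y × Y₀) →L[ℝ] (X × X₀)} {Einv : (X × X₀) →L[ℝ] (Y × Y₀)}
  {F : (X × X₀) →L[ℝ] (Y × Y₀)} {Finv : (Y × Y₀) →L[ℝ] (X × X₀)}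

theorem blk_comp_blk_eq_id_of_eq_comp_comp (hE : E ∘L Einv = .id ℝ (X × X₀))
    (hF : F ∘L Finv = .id ℝ (Y × Y₀))
    (hEq : blk U 0 0 (.id ℝ X₀) = E ∘L blk V 0 0 (.id ℝ Y₀) ∘L F) :
    blk U (b11 E) (-b11 F) (b12 F ∘L b21 E) ∘L blk (b12 Finv ∘L b21 Einv) (-b11 Finv) (b11 Einv) V
      = .id ℝ (X × Y) := by
  have hPF : blk U 0 0 (.id ℝ X₀) ∘L Finv = E ∘L blk V 0 0 (.id ℝ Y₀) := by
    rw [hEq, comp_assoc, comp_assoc, hF, comp_id]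
  have hPF11 : U ∘L b11 Finv = b11 E ∘L V := by simpa using congrArg b11 hPF
  have hPF12 : U ∘L b12 Finv = b12 E := by simpa using congrArg b12 hPF
  have hPF21 : b21 Finv = b21 E ∘L V := by simpa using congrArg b21 hPF
  have hPF22 : b22 Finv = b22 E := by simpa using congrArg b22 hPF
  have hE11 : b11 E ∘L b11 Einv + b12 E ∘L b21 Einv = .id ℝ X := by simpa using congrArg b11 hE
  have hE21 : b21 E ∘L b11 Einv + b22 E ∘L b21 Einv = 0 := by simpa using congrArg b21 hE
  have hF11 : b11 F ∘L b11 Finv + b12 F ∘L b21 Finv = .id ℝ Y := by simpa using congrArg b11 hF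
  have hF12 : b11 F ∘L b12 Finv + b12 F ∘L b22 Finv = 0 := by simpa using congrArg b12 hF
  rw [blk_comp_blk, ← blk_id_zero_zero_id]
  congr 1
  · rw [← comp_assoc, hPF12, add_comm, hE11]
  · rw [comp_neg, hPF11, neg_add_cancel]
  · calc (-b11 F) ∘L b12 Finv ∘L b21 Einv + (b12 F ∘L b21 E) ∘L b11 Einv
        = b12 F ∘L b22 Finv ∘L b21 Einv + b12 F ∘L b21 E ∘L b11 Einv := by
          rw [neg_comp, ← comp_assoc, eq_neg_of_add_eq_zero_left hF12, neg_comp, neg_neg]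
          simp only [comp_assoc]
      _ = b12 F ∘L (b21 E ∘L b11 Einv + b22 E ∘L b21 Einv) := by
          rw [hPF22, comp_add, add_comm]
      _ = 0 := by rw [hE21, comp_zero]
  · simp only [comp_neg, neg_comp, neg_neg, comp_assoc, ← hPF21]
    exact hF11

theorem blk_comp_blk_eq_id_of_eq_comp_comp' (hE : Einv ∘L E = .id ℝ (Y × Y₀))
    (hF : Finv ∘L F = .id ℝ (X × X₀))
    (hEq : blk U 0 0 (.id ℝ X₀) = E ∘L blk V 0 0 (.id ℝ Y₀) ∘L F) :
    blk (b12 Finv ∘L b21 Einv) (-b11 Finv) (b11 Einv) V ∘L blk U (b11 E) (-b11 F) (b12 F ∘L b21 E)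
      = .id ℝ (X × Y) := by
  have hEP : Einv ∘L blk U 0 0 (.id ℝ X₀) = blk V 0 0 (.id ℝ Y₀) ∘L F := by
    rw [hEq, ← comp_assoc, hE, id_comp]
  have hEP11 : b11 Einv ∘L U = V ∘L b11 F := by simpa using congrArg b11 hEP
  have hEP12 : b12 Einv = V ∘L b12 F := by simpa using congrArg b12 hEP
  have hEP21 : b21 Einv ∘L U = b21 F := by simpa using congrArg b21 hEP
  have hEP22 : b22 Einv = b22 F := by simpa using congrArg b22 hEP
  have hE11 : b11 Einv ∘L b11 E + b12 Einv ∘L b21 E = .id ℝ Y := by simpa using congrArg b11 hE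
  have hE21 : b21 Einv ∘L b11 E + b22 Einv ∘L b21 E = 0 := by simpa using congrArg b21 hE
  have hF11 : b11 Finv ∘L b11 F + b12 Finv ∘L b21 F = .id ℝ X := by simpa using congrArg b11 hF
  have hF12 : b11 Finv ∘L b12 F + b12 Finv ∘L b22 F = 0 := by simpa using congrArg b12 hF
  rw [blk_comp_blk, ← blk_id_zero_zero_id]
  congr 1
  · rw [comp_assoc, hEP21, neg_comp, comp_neg, neg_neg, add_comm, hF11]
  · calc (b12 Finv ∘L b21 Einv) ∘L b11 E + (-b11 Finv) ∘L b12 F ∘L b21 E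
        = b12 Finv ∘L b21 Einv ∘L b11 E + b12 Finv ∘L b22 F ∘L b21 E := by
          rw [neg_comp, ← comp_assoc, eq_neg_of_add_eq_zero_left hF12, neg_comp, neg_neg]
          simp only [comp_assoc]
      _ = b12 Finv ∘L (b21 Einv ∘L b11 E + b22 Einv ∘L b21 E) := by
          rw [hEP22, comp_add]
      _ = 0 := by rw [hE21, comp_zero]
  · rw [comp_neg, ← hEP11, add_neg_cancel]
  · rw [← comp_assoc, ← hEP12, hE11]

end Coupling

namespace IsMatricialCoupling

variable {X Y : Type*} [NormedAddCommGroup X] [NormedSpace ℝ X]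
  [NormedAddCommGroup Y] [NormedSpace ℝ Y]
  {U : X →L[ℝ] X} {K : Y →L[ℝ] X} {L : X →L[ℝ] Y} {M : Y →L[ℝ] Y}
  {A : X →L[ℝ] X} {B : Y →L[ℝ] X} {C : X →L[ℝ] Y} {V : Y →L[ℝ] Y}
  (hc : IsMatricialCoupling U K L M A B C V)
include hc

theorem comp_11 : U ∘L A + K ∘L C = .id ℝ X := by simpa using congrArg b11 hc.comp_eq_id
theorem comp_12 : U ∘L B + K ∘L V = 0 := by simpa using congrArg b12 hc.comp_eq_id
theorem comp_21 : L ∘L A + M ∘L C = 0 := by simpa using congrArg b21 hc.comp_eq_id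
theorem comp_22 : L ∘L B + M ∘L V = .id ℝ Y := by simpa using congrArg b22 hc.comp_eq_id
theorem comp_11' : A ∘L U + B ∘L L = .id ℝ X := by simpa using congrArg b11 hc.comp_eq_id'
theorem comp_12' : A ∘L K + B ∘L M = 0 := by simpa using congrArg b12 hc.comp_eq_id'
theorem comp_21' : C ∘L U + V ∘L L = 0 := by simpa using congrArg b21 hc.comp_eq_id'
theorem comp_22' : C ∘L K + V ∘L M = .id ℝ Y := by simpa using congrArg b22 hc.comp_eq_id'

theorem blk_swap_comp_blk_swap : blk K U M L ∘L blk C V A B = .id ℝ (X × Y) := by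
  rw [blk_comp_blk, add_comm (K ∘L C), add_comm (K ∘L V), add_comm (M ∘L C), add_comm (M ∘L V),
    hc.comp_11, hc.comp_12, hc.comp_21, hc.comp_22, blk_id_zero_zero_id]

theorem blk_swap_comp_blk_swap' : blk C V A B ∘L blk K U M L = .id ℝ (Y × X) := by
  rw [blk_comp_blk, hc.comp_22', hc.comp_21', hc.comp_12', hc.comp_11', blk_id_zero_zero_id]

theorem blk_neg_id_comp_blk_neg_id :
    blk (-L) (.id ℝ Y) (A ∘L U) B ∘L blk (-B) (.id ℝ X) (M ∘L V) L = .id ℝ (Y × X) := by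
  rw [blk_comp_blk, ← blk_id_zero_zero_id]
  congr 1
  · rw [neg_comp, comp_neg, neg_neg, id_comp, hc.comp_22]
  · rw [neg_comp, comp_id, id_comp, neg_add_cancel]
  · calc (A ∘L U) ∘L (-B) + B ∘L M ∘L V = A ∘L K ∘L V + B ∘L M ∘L V := by
          rw [comp_neg, comp_assoc, eq_neg_of_add_eq_zero_left hc.comp_12, comp_neg, neg_neg]
      _ = (A ∘L K + B ∘L M) ∘L V := by rw [add_comp, comp_assoc, comp_assoc]
      _ = 0 := by rw [hc.comp_12', zero_comp]
  · rw [comp_id, hc.comp_11']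

theorem blk_neg_id_comp_blk_neg_id' :
    blk (-B) (.id ℝ X) (M ∘L V) L ∘L blk (-L) (.id ℝ Y) (A ∘L U) B = .id ℝ (X × Y) := by
  rw [blk_comp_blk, ← blk_id_zero_zero_id]
  congr 1
  · rw [neg_comp, comp_neg, neg_neg, id_comp, add_comm, hc.comp_11']
  · rw [neg_comp, comp_id, id_comp, neg_add_cancel]
  · calc (M ∘L V) ∘L (-L) + L ∘L A ∘L U = M ∘L C ∘L U + L ∘L A ∘L U := by
          rw [comp_neg, comp_assoc, eq_neg_of_add_eq_zero_right hc.comp_21', comp_neg, neg_neg]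
      _ = (L ∘L A + M ∘L C) ∘L U := by rw [add_comp, comp_assoc, comp_assoc, add_comm]
      _ = 0 := by rw [hc.comp_21, zero_comp]
  · rw [comp_id, add_comm, hc.comp_22]

theorem blk_eq_blk_swap_comp_comp_blk_neg_id :
    blk U 0 0 (.id ℝ Y) = blk K U M L ∘L blk V 0 0 (.id ℝ X) ∘L blk (-L) (.id ℝ Y) (A ∘L U) B := by
  have hVL : V ∘L L = -(C ∘L U) := eq_neg_of_add_eq_zero_right hc.comp_21'
  rw [blk_comp_blk, blk_comp_blk]
  simp only [zero_comp, add_zero, zero_add, id_comp, comp_id, comp_neg, hVL, neg_neg, neg_zero]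
  congr 1
  · rw [← comp_assoc K, ← comp_assoc U, ← add_comp, add_comm, hc.comp_11, id_comp]
  · rw [add_comm, hc.comp_12]
  · rw [← comp_assoc M, ← comp_assoc L, ← add_comp, add_comm, hc.comp_21, zero_comp]
  · rw [add_comm, hc.comp_22]

end IsMatricialCoupling

theorem stmt8_general {X Y X₀ Y₀ : Type*} [NormedAddCommGroup X] [NormedSpace ℝ X]
    [NormedAddCommGroup Y] [NormedSpace ℝ Y]
    [NormedAddCommGroup X₀] [NormedSpace ℝ X₀]
    [NormedAddCommGroup Y₀] [NormedSpace ℝ Y₀]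
    (U : X →L[ℝ] X) (V : Y →L[ℝ] Y)
    (E : (Y × Y₀) →L[ℝ] (X × X₀)) (Einv : (X × X₀) →L[ℝ] (Y × Y₀))
    (F : (X × X₀) →L[ℝ] (Y × Y₀)) (Finv : (Y × Y₀) →L[ℝ] (X × X₀))
    (hE1 : E.comp Einv = ContinuousLinearMap.id ℝ (X × X₀))
    (hE2 : Einv.comp E = ContinuousLinearMap.id ℝ (Y × Y₀))
    (hF1 : F.comp Finv = ContinuousLinearMap.id ℝ (Y × Y₀))
    (hF2 : Finv.comp F = ContinuousLinearMap.id ℝ (X × X₀))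
    (hEq : blk U 0 0 (ContinuousLinearMap.id ℝ X₀) =
      E.comp ((blk V 0 0 (ContinuousLinearMap.id ℝ Y₀)).comp F)) :
    ∃ (E2 : (Y × X) →L[ℝ] (X × Y)) (E2' : (X × Y) →L[ℝ] (Y × X))
      (F2 : (X × Y) →L[ℝ] (Y × X)) (F2' : (Y × X) →L[ℝ] (X × Y)),
      E2.comp E2' = ContinuousLinearMap.id ℝ (X × Y) ∧
      E2'.comp E2 = ContinuousLinearMap.id ℝ (Y × X) ∧
      F2.comp F2' = ContinuousLinearMap.id ℝ (Y × X) ∧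
      F2'.comp F2 = ContinuousLinearMap.id ℝ (X × Y) ∧
      blk U 0 0 (ContinuousLinearMap.id ℝ Y) =
        E2.comp ((blk V 0 0 (ContinuousLinearMap.id ℝ X)).comp F2) ∧
      b12 F2 = ContinuousLinearMap.id ℝ Y ∧
      b12 F2' = ContinuousLinearMap.id ℝ X ∧
      b12 E2 = U ∧ b12 E2' = V := by
  have hc : IsMatricialCoupling U _ _ _ _ _ _ V :=
    ⟨blk_comp_blk_eq_id_of_eq_comp_comp hE1 hF1 hEq,
      blk_comp_blk_eq_id_of_eq_comp_comp' hE2 hF2 hEq⟩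
  exact ⟨_, _, _, _, hc.blk_swap_comp_blk_swap, hc.blk_swap_comp_blk_swap',
    hc.blk_neg_id_comp_blk_neg_id, hc.blk_neg_id_comp_blk_neg_id',
    hc.blk_eq_blk_swap_comp_comp_blk_neg_id, b12_blk .., b12_blk .., b12_blk .., b12_blk ..⟩

/-- Equivalence after extension can always be realized with extension spaces `X₀ = Y`,
`Y₀ = X` and with the specified corner blocks. -/
theorem stmt8 {X Y X₀ Y₀ : Type*} [NormedAddCommGroup X] [NormedSpace ℝ X] [CompleteSpace X]
    [NormedAddCommGroup Y] [NormedSpace ℝ Y] [CompleteSpace Y]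
    [NormedAddCommGroup X₀] [NormedSpace ℝ X₀] [CompleteSpace X₀]
    [NormedAddCommGroup Y₀] [NormedSpace ℝ Y₀] [CompleteSpace Y₀]
    (U : X →L[ℝ] X) (V : Y →L[ℝ] Y)
    (E : (Y × Y₀) →L[ℝ] (X × X₀)) (Einv : (X × X₀) →L[ℝ] (Y × Y₀))
    (F : (X × X₀) →L[ℝ] (Y × Y₀)) (Finv : (Y × Y₀) →L[ℝ] (X × X₀))
    (hE1 : E.comp Einv = ContinuousLinearMap.id ℝ (X × X₀))
    (hE2 : Einv.comp E = ContinuousLinearMap.id ℝ (Y × Y₀))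
    (hF1 : F.comp Finv = ContinuousLinearMap.id ℝ (Y × Y₀))
    (hF2 : Finv.comp F = ContinuousLinearMap.id ℝ (X × X₀))
    (hEq : blk U 0 0 (ContinuousLinearMap.id ℝ X₀) =
      E.comp ((blk V 0 0 (ContinuousLinearMap.id ℝ Y₀)).comp F)) :
    ∃ (E2 : (Y × X) →L[ℝ] (X × Y)) (E2' : (X × Y) →L[ℝ] (Y × X))
      (F2 : (X × Y) →L[ℝ] (Y × X)) (F2' : (Y × X) →L[ℝ] (X × Y)),
      E2.comp E2' = ContinuousLinearMap.id ℝ (X × Y) ∧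
      E2'.comp E2 = ContinuousLinearMap.id ℝ (Y × X) ∧
      F2.comp F2' = ContinuousLinearMap.id ℝ (Y × X) ∧
      F2'.comp F2 = ContinuousLinearMap.id ℝ (X × Y) ∧
      blk U 0 0 (ContinuousLinearMap.id ℝ Y) =
        E2.comp ((blk V 0 0 (ContinuousLinearMap.id ℝ X)).comp F2) ∧
      b12 F2 = ContinuousLinearMap.id ℝ Y ∧
      b12 F2' = ContinuousLinearMap.id ℝ X ∧
      b12 E2 = U ∧ b12 E2' = V :=
  stmt8_general U V E Einv F Finv hE1 hE2 hF1 hF2 hEq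
end

section
/- If U on X and V on Y are equivalent after extension, then U can be approximated in operator norm by invertible operators on X if and only if V can be approximated in operator norm by invertible operators on Y. -/
/-!
Approximability by invertible operators says that an operator lies in the closure of the units of
its operator algebra. This closure is preserved by `T ↦ E ∘ T ∘ F` for isomorphisms `E`, `F`, a
homeomorphism that maps units to units, and by `U ↦ U ⊕ I`. Conversely, if invertible operators
`T` tend to `U ⊕ I`, their `(2,2)` blocks tend to `I`, hence are eventually invertible; the Schur
complements of the `T` are then invertible (their inverses are the `(1,1)` blocks of `T⁻¹`) and
tend to `U`, the Schur complement of `U ⊕ I`.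
-/

open ContinuousLinearMap

section closureUnits

variable {𝕜 : Type*} [NontriviallyNormedField 𝕜] {Z Z' : Type*}
  [NormedAddCommGroup Z] [NormedSpace 𝕜 Z] [NormedAddCommGroup Z'] [NormedSpace 𝕜 Z']

theorem forall_exists_inverse_norm_sub_lt_iff_mem_closure_isUnit (U : Z →L[𝕜] Z) :
    (∀ ε : ℝ, 0 < ε → ∃ W W' : Z →L[𝕜] Z,
      W.comp W' = ContinuousLinearMap.id 𝕜 Z ∧ W'.comp W = ContinuousLinearMap.id 𝕜 Z ∧
      ‖U - W‖ < ε) ↔ U ∈ closure {W : Z →L[𝕜] Z | IsUnit W} := by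
  simp only [Metric.mem_closure_iff, dist_eq_norm, Set.mem_ofPred_eq, isUnit_iff_exists,
    ← one_def, ← mul_def, ← exists_and_right, and_assoc, gt_iff_lt]

theorem IsUnit.equiv_comp_comp (e : Z' ≃L[𝕜] Z) (f : Z ≃L[𝕜] Z') {T : Z' →L[𝕜] Z'} (hT : IsUnit T) :
    IsUnit ((e : Z' →L[𝕜] Z) ∘L T ∘L (f : Z →L[𝕜] Z')) := by
  obtain ⟨T', hTT', hT'T⟩ := isUnit_iff_exists.mp hT
  refine isUnit_iff_exists.mpr ⟨(f.symm : Z' →L[𝕜] Z) ∘L T' ∘L (e.symm : Z →L[𝕜] Z'), ?_, ?_⟩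
  · ext z
    simpa using congr(e ($hTT' (e.symm z)))
  · ext z
    simpa using congr(f.symm ($hT'T (f z)))

theorem mem_closure_isUnit_equiv_comp_comp (e : Z' ≃L[𝕜] Z) (f : Z ≃L[𝕜] Z') {T : Z' →L[𝕜] Z'}
    (hT : T ∈ closure {W | IsUnit W}) :
    (e : Z' →L[𝕜] Z) ∘L T ∘L (f : Z →L[𝕜] Z') ∈ closure {W | IsUnit W} :=
  map_mem_closure (f := fun S : Z' →L[𝕜] Z' => (e : Z' →L[𝕜] Z) ∘L S ∘L (f : Z →L[𝕜] Z'))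
    (by fun_prop) hT fun _ hW => IsUnit.equiv_comp_comp e f hW

theorem mem_closure_isUnit_equiv_comp_comp_iff (e : Z' ≃L[𝕜] Z) (f : Z ≃L[𝕜] Z') {T : Z' →L[𝕜] Z'} :
    (e : Z' →L[𝕜] Z) ∘L T ∘L (f : Z →L[𝕜] Z') ∈ closure {W | IsUnit W} ↔
      T ∈ closure {W | IsUnit W} := by
  refine ⟨fun h => ?_, mem_closure_isUnit_equiv_comp_comp e f⟩
  convert mem_closure_isUnit_equiv_comp_comp e.symm f.symm h
  ext; simp

theorem IsUnit.prodMap_id {T : Z →L[𝕜] Z} (hT : IsUnit T) :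
    IsUnit (T.prodMap (ContinuousLinearMap.id 𝕜 Z')) := by
  obtain ⟨T', hTT', hT'T⟩ := isUnit_iff_exists.mp hT
  refine isUnit_iff_exists.mpr ⟨T'.prodMap (ContinuousLinearMap.id 𝕜 Z'), ?_, ?_⟩
  · ext z <;> simp
    exact congr($hTT' z)
  · ext z <;> simp
    exact congr($hT'T z)

theorem mem_closure_isUnit_prodMap_id {T : Z →L[𝕜] Z} (hT : T ∈ closure {W | IsUnit W}) :
    T.prodMap (ContinuousLinearMap.id 𝕜 Z') ∈ closure {W | IsUnit W} :=
  map_mem_closure (f := fun S : Z →L[𝕜] Z => S.prodMap (ContinuousLinearMap.id 𝕜 Z'))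
    (continuous_id.prod_mapL 𝕜 continuous_const) hT fun _ hW => IsUnit.prodMap_id hW

end closureUnits

open Topology

section schur

variable {X X₀ : Type*} [NormedAddCommGroup X] [NormedSpace ℝ X]
  [NormedAddCommGroup X₀] [NormedSpace ℝ X₀]

theorem blk_zero_zero (A : X →L[ℝ] X) (D : X₀ →L[ℝ] X₀) : blk A 0 0 D = A.prodMap D := by
  ext <;> simp [blk]

theorem apply_eq_blocks (T : (X × X₀) →L[ℝ] (X × X₀)) (x : X) (y : X₀) :
    T (x, y) = (b11 T x + b12 T y, b21 T x + b22 T y) := by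
  rw [show ((x, y) : X × X₀) = (x, 0) + (0, y) by simp, map_add]
  rfl

-- Total thanks to `Ring.inverse`, but the Schur complement of `T` only where `b22 T` is invertible.
noncomputable def schurComplement (T : (X × X₀) →L[ℝ] (X × X₀)) : X →L[ℝ] X :=
  b11 T - b12 T ∘L Ring.inverse (b22 T) ∘L b21 T

theorem schurComplement_prodMap_id (U : X →L[ℝ] X) :
    schurComplement (U.prodMap (ContinuousLinearMap.id ℝ X₀)) = U := by
  ext x; simp [schurComplement, b11, b12]

theorem isUnit_schurComplement {T : (X × X₀) →L[ℝ] (X × X₀)} (hT : IsUnit T)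
    (hD : IsUnit (b22 T)) : IsUnit (schurComplement T) := by
  obtain ⟨T', hTT', hT'T⟩ := isUnit_iff_exists.mp hT
  unfold schurComplement
  set A := b11 T; set B := b12 T; set C := b21 T; set D := b22 T
  set D' := Ring.inverse D
  have hD'D (y : X₀) : D' (D y) = y := congr($(Ring.inverse_mul_cancel D hD) y)
  have hDD' (y : X₀) : D (D' y) = y := congr($(Ring.mul_inverse_cancel D hD) y)
  have hright (x : X) :
      A (b11 T' x) + B (b21 T' x) = x ∧ C (b11 T' x) + D (b21 T' x) = 0 := by
    simpa [apply_eq_blocks] using congr($hTT' (x, 0))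
  have hleft (x : X) (y : X₀) :
      b11 T' (A x + B y) + b12 T' (C x + D y) = x := by
    simpa [apply_eq_blocks] using congr(($hT'T (x, y)).1)
  refine isUnit_iff_exists.mpr ⟨b11 T', ?_, ?_⟩
  · ext x
    have hCP : D' (C (b11 T' x)) = -b21 T' x := by
      rw [eq_neg_of_add_eq_zero_left (hright x).2, map_neg, hD'D]
    simpa [hCP, ← sub_eq_add_neg] using (hright x).1
  · ext x
    have hB : b11 T' (B (D' (C x))) = -b12 T' (C x) := by
      simpa [hDD'] using eq_neg_of_add_eq_zero_left (hleft 0 (D' (C x)))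
    simpa [hB, ← sub_eq_add_neg] using hleft x 0

variable [CompleteSpace X₀]

theorem continuousAt_schurComplement {T : (X × X₀) →L[ℝ] (X × X₀)} (hD : IsUnit (b22 T)) :
    ContinuousAt schurComplement T := by
  have hinv : ContinuousAt Ring.inverse (b22 T) := NormedRing.inverse_continuousAt hD.unit
  unfold b22 at hinv
  unfold schurComplement b11 b12 b21 b22
  fun_prop

theorem mem_closure_isUnit_of_prodMap_id {U : X →L[ℝ] X}
    (h : U.prodMap (ContinuousLinearMap.id ℝ X₀) ∈ closure {W | IsUnit W}) :
    U ∈ closure {W | IsUnit W} := by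
  set P := U.prodMap (ContinuousLinearMap.id ℝ X₀)
  have hD : IsUnit (b22 P) := by
    convert isUnit_one (M := X₀ →L[ℝ] X₀); ext; simp [P, b22]
  have hcont : ContinuousAt schurComplement P := continuousAt_schurComplement hD
  have hDnear : ∀ᶠ T in 𝓝 P, IsUnit (b22 T) :=
    (show Continuous (b22 : ((X × X₀) →L[ℝ] (X × X₀)) → _) by unfold b22; fun_prop).continuousAt
      (Units.isOpen.mem_nhds hD)
  have : (𝓝[{W | IsUnit W}] P).NeBot := mem_closure_iff_nhdsWithin_neBot.mp h
  rw [← schurComplement_prodMap_id (X₀ := X₀) U]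
  refine mem_closure_of_tendsto (b := 𝓝[{W | IsUnit W}] P) (hcont.mono_left nhdsWithin_le_nhds) ?_
  filter_upwards [self_mem_nhdsWithin, nhdsWithin_le_nhds hDnear] with T hT hDT
  exact isUnit_schurComplement hT hDT

theorem mem_closure_isUnit_prodMap_id_iff {U : X →L[ℝ] X} :
    U.prodMap (ContinuousLinearMap.id ℝ X₀) ∈ closure {W | IsUnit W} ↔
      U ∈ closure {W | IsUnit W} :=
  ⟨mem_closure_isUnit_of_prodMap_id, mem_closure_isUnit_prodMap_id⟩

end schur

theorem stmt11_general {X Y X₀ Y₀ : Type*} [NormedAddCommGroup X] [NormedSpace ℝ X]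
    [NormedAddCommGroup Y] [NormedSpace ℝ Y]
    [NormedAddCommGroup X₀] [NormedSpace ℝ X₀] [CompleteSpace X₀]
    [NormedAddCommGroup Y₀] [NormedSpace ℝ Y₀] [CompleteSpace Y₀]
    (U : X →L[ℝ] X) (V : Y →L[ℝ] Y)
    (E : (Y × Y₀) →L[ℝ] (X × X₀)) (Einv : (X × X₀) →L[ℝ] (Y × Y₀))
    (F : (X × X₀) →L[ℝ] (Y × Y₀)) (Finv : (Y × Y₀) →L[ℝ] (X × X₀))
    (hE1 : E.comp Einv = ContinuousLinearMap.id ℝ (X × X₀))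
    (hE2 : Einv.comp E = ContinuousLinearMap.id ℝ (Y × Y₀))
    (hF1 : F.comp Finv = ContinuousLinearMap.id ℝ (Y × Y₀))
    (hF2 : Finv.comp F = ContinuousLinearMap.id ℝ (X × X₀))
    (hEq : blk U 0 0 (ContinuousLinearMap.id ℝ X₀) =
      E.comp ((blk V 0 0 (ContinuousLinearMap.id ℝ Y₀)).comp F)) :
    (∀ ε : ℝ, 0 < ε → ∃ W W' : X →L[ℝ] X,
      W.comp W' = ContinuousLinearMap.id ℝ X ∧ W'.comp W = ContinuousLinearMap.id ℝ X ∧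
      ‖U - W‖ < ε) ↔
    (∀ ε : ℝ, 0 < ε → ∃ W W' : Y →L[ℝ] Y,
      W.comp W' = ContinuousLinearMap.id ℝ Y ∧ W'.comp W = ContinuousLinearMap.id ℝ Y ∧
      ‖V - W‖ < ε) := by
  obtain ⟨e, rfl⟩ : ∃ e : (Y × Y₀) ≃L[ℝ] (X × X₀), (e : (Y × Y₀) →L[ℝ] (X × X₀)) = E :=
    ⟨.equivOfInverse' E Einv hE1 hE2, rfl⟩
  obtain ⟨f, rfl⟩ : ∃ f : (X × X₀) ≃L[ℝ] (Y × Y₀), (f : (X × X₀) →L[ℝ] (Y × Y₀)) = F :=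
    ⟨.equivOfInverse' F Finv hF1 hF2, rfl⟩
  rw [blk_zero_zero, blk_zero_zero] at hEq
  simp only [forall_exists_inverse_norm_sub_lt_iff_mem_closure_isUnit]
  rw [← mem_closure_isUnit_prodMap_id_iff (U := U) (X₀ := X₀),
    ← mem_closure_isUnit_prodMap_id_iff (U := V) (X₀ := Y₀), hEq,
    mem_closure_isUnit_equiv_comp_comp_iff]

/-- If `U` and `V` are equivalent after extension, then `U` can be approximated in norm by
invertible operators iff `V` can. -/
theorem stmt11 {X Y X₀ Y₀ : Type*} [NormedAddCommGroup X] [NormedSpace ℝ X] [CompleteSpace X]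
    [NormedAddCommGroup Y] [NormedSpace ℝ Y] [CompleteSpace Y]
    [NormedAddCommGroup X₀] [NormedSpace ℝ X₀] [CompleteSpace X₀]
    [NormedAddCommGroup Y₀] [NormedSpace ℝ Y₀] [CompleteSpace Y₀]
    (U : X →L[ℝ] X) (V : Y →L[ℝ] Y)
    (E : (Y × Y₀) →L[ℝ] (X × X₀)) (Einv : (X × X₀) →L[ℝ] (Y × Y₀))
    (F : (X × X₀) →L[ℝ] (Y × Y₀)) (Finv : (Y × Y₀) →L[ℝ] (X × X₀))
    (hE1 : E.comp Einv = ContinuousLinearMap.id ℝ (X × X₀))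
    (hE2 : Einv.comp E = ContinuousLinearMap.id ℝ (Y × Y₀))
    (hF1 : F.comp Finv = ContinuousLinearMap.id ℝ (Y × Y₀))
    (hF2 : Finv.comp F = ContinuousLinearMap.id ℝ (X × X₀))
    (hEq : blk U 0 0 (ContinuousLinearMap.id ℝ X₀) =
      E.comp ((blk V 0 0 (ContinuousLinearMap.id ℝ Y₀)).comp F)) :
    (∀ ε : ℝ, 0 < ε → ∃ W W' : X →L[ℝ] X,
      W.comp W' = ContinuousLinearMap.id ℝ X ∧ W'.comp W = ContinuousLinearMap.id ℝ X ∧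
      ‖U - W‖ < ε) ↔
    (∀ ε : ℝ, 0 < ε → ∃ W W' : Y →L[ℝ] Y,
      W.comp W' = ContinuousLinearMap.id ℝ Y ∧ W'.comp W = ContinuousLinearMap.id ℝ Y ∧
      ‖V - W‖ < ε) :=
  stmt11_general U V E Einv F Finv hE1 hE2 hF1 hF2 hEq
end

section
/- A bounded operator T on a Hilbert space H can be written as T = XY with X an invertible bounded operator on H and Y a partial isometry on H if and only if T has closed range. -/
open ContinuousLinearMap

/-!
If `T = X Y` with `X` invertible and `Y` a partial isometry, then `Y` maps `(ker Y)ᗮ`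
isometrically onto its range, so `ran Y` is closed, and `ran T = X (ran Y)` is closed because `X` is
a homeomorphism.

Conversely, if `ran T` is closed, the open mapping theorem makes `T` an isomorphism
`T₁ : (ker T)ᗮ ≃ ran T` of Hilbert spaces. Isomorphic Hilbert spaces are isometrically isomorphic:
`U = T₁ |T₁|⁻¹` is unitary, where `|T₁| = (T₁† T₁)^{1/2}`. With `P` the orthogonal projection onto
`(ker T)ᗮ`, take `Y = U P` and `X = T₁ U⁻¹ ⊕ id` on `ran T ⊕ (ran T)ᗮ`. The square root needs
no functional calculus: for self-adjoint `x` with `‖x‖ < 1`, `(1 - x)^{1/2} = 1 - F` where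
`F = (x + F²) / 2` is the fixed point of a contraction of the ball of radius `‖x‖`.
-/

open scoped RealInnerProductSpace

section Sqrt

open Metric

theorem norm_mul_self_sub_mul_self_le {R : Type*} [NonUnitalNormedRing R] (a b : R) :
    ‖a * a - b * b‖ ≤ (‖a‖ + ‖b‖) * ‖a - b‖ :=
  calc ‖a * a - b * b‖ = ‖a * (a - b) + (a - b) * b‖ := by congr 1; noncomm_ring
    _ ≤ ‖a‖ * ‖a - b‖ + ‖a - b‖ * ‖b‖ :=
      (norm_add_le _ _).trans (add_le_add (norm_mul_le _ _) (norm_mul_le _ _))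
    _ = (‖a‖ + ‖b‖) * ‖a - b‖ := by ring

variable {A : Type*} [NormedRing A] [NormedAlgebra ℝ A] [CompleteSpace A] [StarRing A]
  [StarModule ℝ A] [NormedStarGroup A]

theorem IsSelfAdjoint.exists_isSelfAdjoint_add_mul_self_eq_two_smul {x : A}
    (hx : IsSelfAdjoint x) (hx1 : ‖x‖ < 1) :
    ∃ F : A, ‖F‖ ≤ ‖x‖ ∧ IsSelfAdjoint F ∧ x + F * F = (2 : ℝ) • F := by
  let Φ : closedBall (0 : A) ‖x‖ → closedBall (0 : A) ‖x‖ := fun F =>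
    ⟨(2⁻¹ : ℝ) • (x + F * F), by
      have hF : ‖(F : A)‖ ≤ ‖x‖ := mem_closedBall_zero_iff.mp F.2
      rw [mem_closedBall_zero_iff, norm_smul, Real.norm_of_nonneg (by norm_num)]
      calc 2⁻¹ * ‖x + F * F‖ ≤ 2⁻¹ * (‖x‖ + ‖(F : A)‖ * ‖(F : A)‖) := by
            gcongr
            exact (norm_add_le _ _).trans (by gcongr; exact norm_mul_le _ _)
        _ ≤ ‖x‖ := by nlinarith [norm_nonneg x, norm_nonneg (F : A)]⟩
  have hΦ : ContractingWith ‖x‖₊ Φ := by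
    refine ⟨hx1, LipschitzWith.of_dist_le_mul fun F G => ?_⟩
    have hF : ‖(F : A)‖ ≤ ‖x‖ := mem_closedBall_zero_iff.mp F.2
    have hG : ‖(G : A)‖ ≤ ‖x‖ := mem_closedBall_zero_iff.mp G.2
    have hdiff : (Φ F : A) - Φ G = (2⁻¹ : ℝ) • ((F : A) * F - G * G) := by
      simp only [Φ, ← smul_sub, add_sub_add_left_eq_sub]
    rw [Subtype.dist_eq, Subtype.dist_eq, dist_eq_norm, dist_eq_norm, hdiff, norm_smul,
      Real.norm_of_nonneg (by norm_num), coe_nnnorm]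
    have := norm_mul_self_sub_mul_self_le (F : A) G
    nlinarith [norm_nonneg ((F : A) - G)]
  have : CompleteSpace (closedBall (0 : A) ‖x‖) := isClosed_closedBall.completeSpace_coe
  have : Nonempty (closedBall (0 : A) ‖x‖) := ⟨⟨0, by simp⟩⟩
  set F := hΦ.fixedPoint Φ
  have hFix : (2⁻¹ : ℝ) • (x + (F : A) * F) = F := congrArg Subtype.val hΦ.fixedPoint_isFixedPt
  have hFstar : star (F : A) = F := by
    let F' : closedBall (0 : A) ‖x‖ := ⟨star (F : A), by
      rw [mem_closedBall_zero_iff, norm_star]; exact mem_closedBall_zero_iff.mp F.2⟩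
    have : Function.IsFixedPt Φ F' := Subtype.ext <| by
      show (2⁻¹ : ℝ) • (x + star (F : A) * star (F : A)) = star (F : A)
      conv_rhs => rw [← hFix]
      simp only [star_smul, star_add, star_mul, hx.star_eq, star_trivial]
    exact congrArg Subtype.val (hΦ.fixedPoint_unique this)
  refine ⟨F, mem_closedBall_zero_iff.mp F.2, hFstar, ?_⟩
  calc x + (F : A) * F = (2 : ℝ) • (2⁻¹ : ℝ) • (x + (F : A) * F) := by
        rw [smul_smul]; norm_num
    _ = (2 : ℝ) • (F : A) := by rw [hFix]

theorem IsSelfAdjoint.exists_isUnit_mul_self_eq_one_sub {x : A} (hx : IsSelfAdjoint x)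
    (hx1 : ‖x‖ < 1) : ∃ b : A, IsSelfAdjoint b ∧ IsUnit b ∧ b * b = 1 - x := by
  obtain ⟨F, hFx, hF, hFix⟩ := hx.exists_isSelfAdjoint_add_mul_self_eq_two_smul hx1
  refine ⟨1 - F, (IsSelfAdjoint.one A).sub hF, isUnit_one_sub_of_norm_lt_one (hFx.trans_lt hx1),
    ?_⟩
  calc (1 - F) * (1 - F) = 1 - (2 : ℝ) • F + F * F := by rw [two_smul]; noncomm_ring
    _ = 1 - x := by rw [← hFix]; abel

end Sqrt

section RealHilbert

variable {E F : Type*} [NormedAddCommGroup E] [InnerProductSpace ℝ E]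
  [NormedAddCommGroup F] [InnerProductSpace ℝ F]

theorem LinearMap.IsSymmetric.norm_le_of_forall_abs_inner_le {A : E →L[ℝ] E}
    (hA : (A : E →ₗ[ℝ] E).IsSymmetric) {r : ℝ} (hr : 0 ≤ r)
    (h : ∀ x, |⟪A x, x⟫| ≤ r * ‖x‖ ^ 2) : ‖A‖ ≤ r := by
  rw [A.norm_eq_iSup_rayleighQuotient hA]
  refine ciSup_le fun x => ?_
  rcases eq_or_ne x 0 with rfl | hx
  · simpa using hr
  rw [ContinuousLinearMap.rayleighQuotient, ContinuousLinearMap.reApplyInnerSelf_apply,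
    RCLike.re_to_real, abs_div, abs_sq, div_le_iff₀ (by positivity)]
  exact h x

variable [CompleteSpace E]

theorem IsSelfAdjoint.exists_isUnit_mul_self_eq_of_coercive {G : E →L[ℝ] E}
    (hG : IsSelfAdjoint G) {c : ℝ} (hc : 0 < c) (hGc : ∀ x, c * ‖x‖ ^ 2 ≤ ⟪G x, x⟫) :
    ∃ B : E →L[ℝ] E, IsSelfAdjoint B ∧ IsUnit B ∧ B * B = G := by
  -- the scaling makes the numerical range of `1 - t⁻¹ • G` lie in `[c / t, ‖G‖ / t]`
  set t := ‖G‖ + c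
  have ht : 0 < t := by positivity
  have hsa : IsSelfAdjoint (1 - t⁻¹ • G) :=
    (IsSelfAdjoint.one _).sub (.smul (star_trivial _) hG)
  have hform : ∀ y, |⟪(1 - t⁻¹ • G) y, y⟫| ≤ ‖G‖ / t * ‖y‖ ^ 2 := by
    intro y
    have hle : ⟪G y, y⟫ ≤ ‖G‖ * ‖y‖ ^ 2 :=
      (real_inner_le_norm _ _).trans (by rw [sq, ← mul_assoc]; gcongr; exact G.le_opNorm y)
    have heq : ⟪(1 - t⁻¹ • G) y, y⟫ = ‖y‖ ^ 2 - t⁻¹ * ⟪G y, y⟫ := by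
      simp [inner_sub_left, real_inner_smul_left]
    have hup : t⁻¹ * ⟪G y, y⟫ ≤ ‖G‖ / t * ‖y‖ ^ 2 := by
      rw [div_eq_inv_mul, mul_assoc]
      exact mul_le_mul_of_nonneg_left hle (inv_nonneg.mpr ht.le)
    have hlow : c / t * ‖y‖ ^ 2 ≤ t⁻¹ * ⟪G y, y⟫ := by
      rw [div_eq_inv_mul, mul_assoc]
      exact mul_le_mul_of_nonneg_left (hGc y) (inv_nonneg.mpr ht.le)
    have hGt : ‖G‖ / t = 1 - c / t := by field_simp; ring
    rw [heq, abs_le]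
    constructor <;> nlinarith [div_nonneg (norm_nonneg G) ht.le]
  have hnorm : ‖1 - t⁻¹ • G‖ < 1 :=
    (hsa.isSymmetric.norm_le_of_forall_abs_inner_le (by positivity) hform).trans_lt
      ((div_lt_one ht).mpr (by linarith))
  obtain ⟨b, hb, hbu, hbb⟩ := hsa.exists_isUnit_mul_self_eq_one_sub hnorm
  refine ⟨√t • b, .smul (star_trivial _) hb, hbu.smul (Units.mk0 √t (by positivity)), ?_⟩
  rw [smul_mul_smul_comm, hbb, Real.mul_self_sqrt ht.le, sub_sub_cancel, smul_inv_smul₀ ht.ne']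

variable [CompleteSpace F]

theorem ContinuousLinearEquiv.nonempty_linearIsometryEquiv (T : E ≃L[ℝ] F) :
    Nonempty (E ≃ₗᵢ[ℝ] F) := by
  set A : E →L[ℝ] F := T.toContinuousLinearMap
  have hAA : ∀ x, ⟪(A.adjoint ∘L A) x, x⟫ = ‖A x‖ ^ 2 := fun x => by
    rw [ContinuousLinearMap.comp_apply, ContinuousLinearMap.adjoint_inner_left,
      real_inner_self_eq_norm_sq]
  have hbelow : ∀ x, (‖(T.symm : F →L[ℝ] E)‖ ^ 2 + 1)⁻¹ * ‖x‖ ^ 2 ≤ ‖A x‖ ^ 2 := fun x => by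
    rw [inv_mul_le_iff₀ (by positivity)]
    have h : ‖x‖ ≤ ‖(T.symm : F →L[ℝ] E)‖ * ‖A x‖ := by
      simpa [A] using (T.symm : F →L[ℝ] E).le_opNorm (T x)
    nlinarith [norm_nonneg x, norm_nonneg (A x)]
  obtain ⟨B, hB, hBu, hBB⟩ :=
    A.isPositive_adjoint_comp_self.isSelfAdjoint.exists_isUnit_mul_self_eq_of_coercive
      (by positivity) fun x => (hbelow x).trans_eq (hAA x).symm
  have hAB : ∀ x, ‖A x‖ = ‖B x‖ := fun x => by
    rw [← sq_eq_sq₀ (norm_nonneg _) (norm_nonneg _), ← hAA, ← hBB, ← real_inner_self_eq_norm_sq]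
    exact hB.isSymmetric (B x) x
  let Bu : E ≃L[ℝ] E := ContinuousLinearEquiv.unitsEquiv ℝ E hBu.unit
  refine ⟨{ (Bu.symm.trans T).toLinearEquiv with norm_map' := fun y => ?_ }⟩
  show ‖A (Bu.symm y)‖ = ‖y‖
  rw [hAB, show B (Bu.symm y) = y from Bu.apply_symm_apply y]

end RealHilbert

namespace Submodule

variable {R M : Type*} [Ring R] [TopologicalSpace M] [AddCommGroup M] [IsTopologicalAddGroup M]
  [Module R M] {p q : Submodule R M}

theorem IsTopCompl.exists_continuousLinearEquiv_extend (h : IsTopCompl p q) (W : p ≃L[R] p) :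
    ∃ X : M ≃L[R] M, ∀ u : p, X u = W u := by
  let e := prodEquivOfIsTopCompl p q h
  refine ⟨(e.symm.trans (W.prodCongr (.refl R q))).trans e, fun u => ?_⟩
  simp [e, coe_symm_prodEquivOfIsTopCompl]

end Submodule

namespace ContinuousLinearMap

variable {𝕜 E F : Type*} [RCLike 𝕜] [NormedAddCommGroup E] [InnerProductSpace 𝕜 E]
  [NormedAddCommGroup F] [InnerProductSpace 𝕜 F]

def IsPartialIsometry (Y : E →L[𝕜] F) : Prop :=
  ∀ v ∈ (LinearMap.ker (Y : E →ₗ[𝕜] F))ᗮ, ‖Y v‖ = ‖v‖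

theorem isPartialIsometry_comp_orthogonalProjectionOnto (K : Submodule 𝕜 E)
    [K.HasOrthogonalProjection] (U : K →ₗᵢ[𝕜] F) :
    (U.toContinuousLinearMap ∘L K.orthogonalProjectionOnto).IsPartialIsometry := by
  have hker : LinearMap.ker
      (U.toContinuousLinearMap ∘L K.orthogonalProjectionOnto : E →ₗ[𝕜] F) = Kᗮ := by
    ext v
    simp [map_eq_zero_iff U U.injective, Submodule.orthogonalProjectionOnto_eq_zero_iff]
  intro v hv
  rw [hker, Submodule.orthogonal_orthogonal] at hv
  simp [Submodule.orthogonalProjectionOnto_mem_subspace_eq_self (⟨v, hv⟩ : K)]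

theorem IsPartialIsometry.isClosed_range [CompleteSpace E] {Y : E →L[𝕜] F}
    (hY : Y.IsPartialIsometry) : IsClosed (Set.range Y) := by
  set K := (LinearMap.ker (Y : E →ₗ[𝕜] F))ᗮ
  have : CompleteSpace (LinearMap.ker (Y : E →ₗ[𝕜] F)) := Y.isClosed_ker.completeSpace_coe
  let J : K →ₗᵢ[𝕜] F := ⟨(Y ∘L K.subtypeL : K →ₗ[𝕜] F), fun v => hY v v.2⟩
  have hrange : Set.range Y = Set.range J := by
    refine Set.Subset.antisymm ?_ fun _ ⟨v, hv⟩ => ⟨v, hv⟩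
    rintro _ ⟨x, rfl⟩
    obtain ⟨a, ha, b, hb, rfl⟩ :=
      (LinearMap.ker (Y : E →ₗ[𝕜] F)).exists_add_mem_mem_orthogonal x
    have ha : Y a = 0 := ha
    exact ⟨⟨b, hb⟩, by simp [J, ha]⟩
  rw [hrange]
  exact J.isometry.isClosedEmbedding.isClosed_range

variable [CompleteSpace E] [CompleteSpace F]

theorem exists_orthogonal_ker_equiv_range (T : E →L[𝕜] F) (hT : IsClosed (Set.range T)) :
    ∃ T₁ : (LinearMap.ker (T : E →ₗ[𝕜] F))ᗮ ≃L[𝕜] LinearMap.range (T : E →ₗ[𝕜] F),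
      ∀ x, (T₁ ((LinearMap.ker (T : E →ₗ[𝕜] F))ᗮ.orthogonalProjectionOnto x) : F) = T x := by
  set K := (LinearMap.ker (T : E →ₗ[𝕜] F))ᗮ
  have : CompleteSpace (LinearMap.ker (T : E →ₗ[𝕜] F)) := T.isClosed_ker.completeSpace_coe
  have : CompleteSpace (LinearMap.range (T : E →ₗ[𝕜] F)) := hT.completeSpace_coe
  have hTP : ∀ x, T (K.orthogonalProjectionOnto x) = T x := fun x => by
    have h := K.sub_starProjection_mem_orthogonal x
    rw [Submodule.orthogonal_orthogonal, LinearMap.mem_ker, ContinuousLinearMap.coe_coe, map_sub,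
      sub_eq_zero, Submodule.starProjection_apply] at h
    exact h.symm
  let T₁ : K →L[𝕜] LinearMap.range (T : E →ₗ[𝕜] F) :=
    (T ∘L K.subtypeL).codRestrict _ fun x => LinearMap.mem_range_self (T : E →ₗ[𝕜] F) x
  have hinj : T₁.ker = ⊥ := LinearMap.ker_eq_bot'.mpr fun x hx => by
    have hx : (x : E) ∈ LinearMap.ker (T : E →ₗ[𝕜] F) := congrArg Subtype.val hx
    simpa using (Submodule.orthogonal_disjoint _).le_bot ⟨hx, x.2⟩
  have hsurj : T₁.range = ⊤ := LinearMap.range_eq_top.mpr fun ⟨_, x, hx⟩ =>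
    ⟨K.orthogonalProjectionOnto x, Subtype.ext ((hTP x).trans hx)⟩
  exact ⟨.ofBijective T₁ hinj hsurj, fun x => hTP x⟩

end ContinuousLinearMap

/-- A Hilbert space operator factors as an invertible operator times a partial isometry iff it
has closed range. -/
theorem stmt13 {H : Type*} [NormedAddCommGroup H] [InnerProductSpace ℝ H] [CompleteSpace H]
    (T : H →L[ℝ] H) :
    (∃ Xop Yop : H →L[ℝ] H,
      (∃ Xop' : H →L[ℝ] H, Xop.comp Xop' = ContinuousLinearMap.id ℝ H ∧
        Xop'.comp Xop = ContinuousLinearMap.id ℝ H) ∧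
      (∀ v ∈ (LinearMap.ker (Yop : H →ₗ[ℝ] H))ᗮ, ‖Yop v‖ = ‖v‖) ∧
      T = Xop.comp Yop) ↔
    IsClosed (Set.range T) := by
  constructor
  · rintro ⟨X, Y, ⟨X', hXX', hX'X⟩, hY, rfl⟩
    let Xe := ContinuousLinearEquiv.equivOfInverse' X X' hXX' hX'X
    rw [ContinuousLinearMap.coe_comp, Set.range_comp]
    exact Xe.toHomeomorph.isClosedMap _ (IsPartialIsometry.isClosed_range hY)
  · intro hT
    set K := (LinearMap.ker (T : H →ₗ[ℝ] H))ᗮ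
    set R := LinearMap.range (T : H →ₗ[ℝ] H)
    have : CompleteSpace R := hT.completeSpace_coe
    obtain ⟨T₁, hT₁⟩ := T.exists_orthogonal_ker_equiv_range hT
    obtain ⟨U⟩ := T₁.nonempty_linearIsometryEquiv
    obtain ⟨X, hX⟩ := R.isTopCompl_orthogonal.exists_continuousLinearEquiv_extend
      (U.symm.toContinuousLinearEquiv.trans T₁)
    refine ⟨X, (R.subtypeₗᵢ.comp U.toLinearIsometry).toContinuousLinearMap ∘L
      K.orthogonalProjectionOnto, ⟨X.symm, X.coe_comp_coe_symm, X.coe_symm_comp_coe⟩,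
      isPartialIsometry_comp_orthogonalProjectionOnto K _, ?_⟩
    ext x
    simpa [hX] using (hT₁ x).symm
end

section
/- Let U on X and V on Y be Hilbert space operators with closed range, and suppose there exist invertible bounded operators K : ker U → ker V and K₊ : ker U* → ker V*. Then U and V are Schur coupled. -/
/-!
Schur coupling survives replacing `V` by an equivalent operator `E V F` (`E`, `F` invertible,
possibly between different spaces), and `U` is Schur coupled to `1_Z ⊕ U` for every `Z`, through
`[[1, π₂], [ι₂ (1 - U), 1]]`. A closed-range operator `T` on a Hilbert space is equivalent to
`1 ⊕ 0 : (ker T)ᗮ ⊕ ker T → (ker T)ᗮ ⊕ (ran T)ᗮ`. After possibly swapping `U` and `V`, `(ker U)ᗮ`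
embeds isometrically into `(ker V)ᗮ`; if `Z` is the orthogonal complement of the image, then
`1_Z ⊕ U ~ 1_{Z ⊕ (ker U)ᗮ} ⊕ 0 ~ 1_{(ker V)ᗮ} ⊕ 0 ~ V`, the zero blocks being matched by `K` and
by `K₊`, since `(ran T)ᗮ = ker T*`.
-/

open ContinuousLinearMap

section SchurCoupling

variable {𝕜 : Type*} [NormedField 𝕜] {X Y X' Y' X'' Y'' Z Z' : Type*}
  [NormedAddCommGroup X] [NormedSpace 𝕜 X] [NormedAddCommGroup Y] [NormedSpace 𝕜 Y]
  [NormedAddCommGroup X'] [NormedSpace 𝕜 X'] [NormedAddCommGroup Y'] [NormedSpace 𝕜 Y']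
  [NormedAddCommGroup X''] [NormedSpace 𝕜 X''] [NormedAddCommGroup Y''] [NormedSpace 𝕜 Y'']
  [NormedAddCommGroup Z] [NormedSpace 𝕜 Z] [NormedAddCommGroup Z'] [NormedSpace 𝕜 Z']

def SchurCoupled (U : X →L[𝕜] X) (V : Y →L[𝕜] Y) : Prop :=
  ∃ (A : X ≃L[𝕜] X) (B : Y →L[𝕜] X) (C : X →L[𝕜] Y) (D : Y ≃L[𝕜] Y),
    U = (A : X →L[𝕜] X) - B ∘L (D.symm : Y →L[𝕜] Y) ∘L C ∧
      V = (D : Y →L[𝕜] Y) - C ∘L (A.symm : X →L[𝕜] X) ∘L B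

def ContinuousLinearMap.IsEquivalent (S : X →L[𝕜] X') (T : Y →L[𝕜] Y') : Prop :=
  ∃ (E : X' ≃L[𝕜] Y') (F : Y ≃L[𝕜] X), T = (E : X' →L[𝕜] Y') ∘L S ∘L (F : Y →L[𝕜] X)

namespace ContinuousLinearMap.IsEquivalent

theorem refl (S : X →L[𝕜] X') : S.IsEquivalent S :=
  ⟨.refl 𝕜 X', .refl 𝕜 X, by ext; rfl⟩

theorem symm {S : X →L[𝕜] X'} {T : Y →L[𝕜] Y'} (h : S.IsEquivalent T) : T.IsEquivalent S := by
  obtain ⟨E, F, rfl⟩ := h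
  exact ⟨E.symm, F.symm, by ext; simp⟩

theorem trans {S : X →L[𝕜] X'} {T : Y →L[𝕜] Y'} {R : X'' →L[𝕜] Y''} (h : S.IsEquivalent T)
    (h' : T.IsEquivalent R) : S.IsEquivalent R := by
  obtain ⟨E, F, rfl⟩ := h
  obtain ⟨E', F', rfl⟩ := h'
  exact ⟨E.trans E', F'.trans F, by ext; simp⟩

theorem prodMap {S : X →L[𝕜] X'} {T : Y →L[𝕜] Y'} {S' : X'' →L[𝕜] Y''} {T' : Z →L[𝕜] Z'}
    (h : S.IsEquivalent T) (h' : S'.IsEquivalent T') :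
    (S.prodMap S').IsEquivalent (T.prodMap T') := by
  obtain ⟨E, F, rfl⟩ := h
  obtain ⟨E', F', rfl⟩ := h'
  exact ⟨E.prodCongr E', F.prodCongr F', by ext <;> simp⟩

theorem prodMap_assoc (S : X →L[𝕜] X') (T : Y →L[𝕜] Y') (R : Z →L[𝕜] Z') :
    (S.prodMap (T.prodMap R)).IsEquivalent ((S.prodMap T).prodMap R) :=
  ⟨(ContinuousLinearEquiv.prodAssoc 𝕜 X' Y' Z').symm, ContinuousLinearEquiv.prodAssoc 𝕜 X Y Z,
    by ext <;> simp⟩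

theorem one (e : X ≃L[𝕜] Y) : (1 : X →L[𝕜] X).IsEquivalent (1 : Y →L[𝕜] Y) :=
  ⟨e, e.symm, by ext; simp⟩

theorem zero (e : X ≃L[𝕜] Y) (e' : X' ≃L[𝕜] Y') :
    (0 : X →L[𝕜] X').IsEquivalent (0 : Y →L[𝕜] Y') :=
  ⟨e', e.symm, by simp⟩

end ContinuousLinearMap.IsEquivalent

theorem SchurCoupled.symm {U : X →L[𝕜] X} {V : Y →L[𝕜] Y} (h : SchurCoupled U V) :
    SchurCoupled V U := by
  obtain ⟨A, B, C, D, hU, hV⟩ := h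
  exact ⟨D, C, B, A, hV, hU⟩

theorem SchurCoupled.of_isEquivalent {U : X →L[𝕜] X} {V : Y →L[𝕜] Y} {W : Y' →L[𝕜] Y'}
    (h : SchurCoupled U V) (hVW : V.IsEquivalent W) : SchurCoupled U W := by
  obtain ⟨A, B, C, D, hU, rfl⟩ := h
  obtain ⟨E, F, rfl⟩ := hVW
  refine ⟨A, B ∘L (F : Y' →L[𝕜] Y), (E : Y →L[𝕜] Y') ∘L C, F.trans (D.trans E), ?_, ?_⟩
  · rw [hU]; ext; simp
  · ext; simp

theorem schurCoupled_one_prodMap (U : X →L[𝕜] X) : SchurCoupled U ((1 : Z →L[𝕜] Z).prodMap U) :=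
  ⟨.refl 𝕜 X, snd 𝕜 Z X, inr 𝕜 Z X ∘L (1 - U), .refl 𝕜 (Z × X), by ext; simp, by ext <;> simp⟩

end SchurCoupling

section Hilbert

open Submodule

variable {𝕜 : Type*} [RCLike 𝕜] {E F : Type*} [NormedAddCommGroup E] [InnerProductSpace 𝕜 E]
  [CompleteSpace E] [NormedAddCommGroup F] [InnerProductSpace 𝕜 F] [CompleteSpace F]

theorem ContinuousLinearMap.one_prodMap_zero_isEquivalent (T : E →L[𝕜] F)
    (hT : IsClosed (Set.range T)) :
    ((1 : T.kerᗮ →L[𝕜] T.kerᗮ).prodMap (0 : T.ker →L[𝕜] T.rangeᗮ)).IsEquivalent T := by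
  have : CompleteSpace T.range := hT.completeSpace_coe
  have hdom : ((T ∘L T.kerᗮ.subtypeL : T.kerᗮ →L[𝕜] F) : T.kerᗮ →ₗ[𝕜] F) =
      (T : E →ₗ[𝕜] F).domRestrict T.kerᗮ := rfl
  have hrange : (T ∘L T.kerᗮ.subtypeL).range = T.range := by
    rw [hdom, LinearMap.range_domRestrict, map_eq_range_iff]
    exact (isCompl_orthogonal T.ker).symm.codisjoint
  have hker : (T ∘L T.kerᗮ.subtypeL).ker = ⊥ := by
    rw [hdom, LinearMap.ker_eq_bot, LinearMap.injective_domRestrict_iff]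
    exact (isCompl_orthogonal T.ker).symm.disjoint
  have hcompl : IsTopCompl T.kerᗮ T.ker := (isTopCompl_orthogonal T.ker).symm
  refine ⟨coprodSubtypeLEquivOfIsCompl (T ∘L T.kerᗮ.subtypeL)
    (hrange ▸ isCompl_orthogonal T.range) hker,
    (prodEquivOfIsTopCompl _ _ hcompl).symm, ?_⟩
  ext x
  obtain ⟨⟨z, k⟩, rfl⟩ := (prodEquivOfIsTopCompl _ _ hcompl).surjective x
  have hk : T k = 0 := k.2
  simp only [coe_comp, ContinuousLinearEquiv.coe_coe, Function.comp_apply,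
    ContinuousLinearEquiv.symm_apply_apply]
  rw [prodEquivOfIsTopCompl_apply, map_add, hk, add_zero, coprodSubtypeLEquivOfIsCompl,
    ContinuousLinearEquiv.coeFn_ofBijective]
  simp

universe u v

variable {P : Type u} {Q : Type v} [NormedAddCommGroup P] [InnerProductSpace 𝕜 P]
  [CompleteSpace P] [NormedAddCommGroup Q] [InnerProductSpace 𝕜 Q] [CompleteSpace Q]

noncomputable def LinearIsometry.orthogonalRangeProdEquiv (ν : P →ₗᵢ[𝕜] Q) :
    ((LinearMap.range ν.toLinearMap)ᗮ × P) ≃L[𝕜] Q :=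
  have : CompleteSpace (ν.toContinuousLinearMap : P →ₗ[𝕜] Q).range :=
    ν.antilipschitz.completeSpace_range_clm (f := ν.toContinuousLinearMap)
  (ContinuousLinearEquiv.prodComm 𝕜 _ _).trans
    (ν.toContinuousLinearMap.coprodSubtypeLEquivOfIsCompl (isCompl_orthogonal _)
      (LinearMap.ker_eq_bot.mpr ν.injective))

variable (𝕜 P Q) in
theorem nonempty_linearIsometry_or : Nonempty (P →ₗᵢ[𝕜] Q) ∨ Nonempty (Q →ₗᵢ[𝕜] P) := by
  obtain ⟨s, b, -⟩ := exists_hilbertBasis 𝕜 P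
  obtain ⟨t, c, -⟩ := exists_hilbertBasis 𝕜 Q
  rcases le_total (Cardinal.lift.{v} (Cardinal.mk s)) (Cardinal.lift.{u} (Cardinal.mk t))
    with h | h
  · obtain ⟨f⟩ := Cardinal.lift_mk_le'.mp h
    exact .inl ⟨(c.orthonormal.comp f f.injective).orthogonalFamily.linearIsometry.comp
      b.repr.toLinearIsometry⟩
  · obtain ⟨f⟩ := Cardinal.lift_mk_le'.mp h
    exact .inr ⟨(b.orthonormal.comp f f.injective).orthogonalFamily.linearIsometry.comp
      c.repr.toLinearIsometry⟩

theorem schurCoupled_of_linearIsometry {U : E →L[𝕜] E} {V : F →L[𝕜] F}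
    (hU : IsClosed (Set.range U)) (hV : IsClosed (Set.range V)) (K : U.ker ≃L[𝕜] V.ker)
    (Kp : U.rangeᗮ ≃L[𝕜] V.rangeᗮ) (ν : U.kerᗮ →ₗᵢ[𝕜] V.kerᗮ) : SchurCoupled U V := by
  set Z := (LinearMap.range ν.toLinearMap)ᗮ
  have hone : (1 : Z →L[𝕜] Z).prodMap (1 : U.kerᗮ →L[𝕜] U.kerᗮ) = 1 := by
    ext <;> rfl
  have hU' : ((1 : Z →L[𝕜] Z).prodMap U).IsEquivalent
      ((1 : (Z × U.kerᗮ) →L[𝕜] (Z × U.kerᗮ)).prodMap (0 : U.ker →L[𝕜] U.rangeᗮ)) := by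
    rw [← hone]
    exact ((IsEquivalent.refl _).prodMap (U.one_prodMap_zero_isEquivalent hU).symm).trans
      (IsEquivalent.prodMap_assoc _ _ _)
  have hV' : ((1 : (Z × U.kerᗮ) →L[𝕜] (Z × U.kerᗮ)).prodMap
      (0 : U.ker →L[𝕜] U.rangeᗮ)).IsEquivalent V :=
    ((IsEquivalent.one ν.orthogonalRangeProdEquiv).prodMap (IsEquivalent.zero K Kp)).trans
      (V.one_prodMap_zero_isEquivalent hV)
  exact (schurCoupled_one_prodMap U).of_isEquivalent (hU'.trans hV')

end Hilbert

/-- Closed range Hilbert space operators whose kernels and cokernels are isomorphic are Schur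
coupled. -/
theorem stmt15 {X Y : Type*} [NormedAddCommGroup X] [InnerProductSpace ℝ X] [CompleteSpace X]
    [NormedAddCommGroup Y] [InnerProductSpace ℝ Y] [CompleteSpace Y]
    (U : X →L[ℝ] X) (V : Y →L[ℝ] Y)
    (hU : IsClosed (Set.range U)) (hV : IsClosed (Set.range V))
    (K : ↥(LinearMap.ker (U : X →ₗ[ℝ] X)) ≃L[ℝ] ↥(LinearMap.ker (V : Y →ₗ[ℝ] Y)))
    (Kp : ↥(LinearMap.ker ((ContinuousLinearMap.adjoint U : X →L[ℝ] X) : X →ₗ[ℝ] X)) ≃L[ℝ]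
      ↥(LinearMap.ker ((ContinuousLinearMap.adjoint V : Y →L[ℝ] Y) : Y →ₗ[ℝ] Y))) :
    ∃ (A : X →L[ℝ] X) (B : Y →L[ℝ] X) (C : X →L[ℝ] Y) (D : Y →L[ℝ] Y)
      (A' : X →L[ℝ] X) (D' : Y →L[ℝ] Y),
      A.comp A' = ContinuousLinearMap.id ℝ X ∧ A'.comp A = ContinuousLinearMap.id ℝ X ∧
      D.comp D' = ContinuousLinearMap.id ℝ Y ∧ D'.comp D = ContinuousLinearMap.id ℝ Y ∧
      U = A - B.comp (D'.comp C) ∧ V = D - C.comp (A'.comp B) := by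
  have Kp' : U.rangeᗮ ≃L[ℝ] V.rangeᗮ :=
    ((ContinuousLinearEquiv.ofEq _ _ U.orthogonal_range).trans Kp).trans
      (ContinuousLinearEquiv.ofEq _ _ V.orthogonal_range).symm
  obtain ⟨A, B, C, D, hUS, hVS⟩ : SchurCoupled U V := by
    rcases nonempty_linearIsometry_or ℝ U.kerᗮ V.kerᗮ with ⟨⟨ν⟩⟩ | ⟨⟨ν⟩⟩
    · exact schurCoupled_of_linearIsometry hU hV K Kp' ν
    · exact (schurCoupled_of_linearIsometry hV hU K.symm Kp'.symm ν).symm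
  exact ⟨A, B, C, D, A.symm, D.symm, by ext; simp, by ext; simp, by ext; simp, by ext; simp,
    hUS, hVS⟩
end

section
/- Let U on X and V on Y be Hilbert space operators with closed range which are equivalent after extension. Then there exist invertible bounded operators K : ker U → ker V and K₊ : ker U* → ker V*. -/
/-!
If `U ⊕ I = E (V ⊕ I) F` with `E`, `F` invertible, then `F` maps `ker (U ⊕ I) = ker U × 0`
isomorphically onto `ker (V ⊕ I) = ker V × 0`. Taking adjoints for the `L²` inner product on the
products gives `U* ⊕ I = F* (V* ⊕ I) E*` with `F*`, `E*` invertible, so the same argument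
identifies `ker U*` with `ker V*`.
-/

open ContinuousLinearMap

section kernels

variable {R M M' N N' : Type*} [Ring R] [TopologicalSpace M] [AddCommGroup M] [Module R M]
  [TopologicalSpace M'] [AddCommGroup M'] [Module R M'] [TopologicalSpace N] [AddCommGroup N]
  [Module R N] [TopologicalSpace N'] [AddCommGroup N'] [Module R N']

def kerEquivOfEqComp (A : M →L[R] N) (B : M' →L[R] N') (E : N' →L[R] N)
    (hE : Function.Injective E) (F : M ≃L[R] M') (h : A = E ∘L B ∘L (F : M →L[R] M')) :
    LinearMap.ker (A : M →ₗ[R] N) ≃L[R] LinearMap.ker (B : M' →ₗ[R] N') :=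
  have hker : LinearMap.ker (A : M →ₗ[R] N) =
      (LinearMap.ker (B : M' →ₗ[R] N')).map (F.symm : M' →ₗ[R] M) := by
    rw [Submodule.map_equiv_eq_comap_symm]
    ext x
    simp [h, LinearMap.mem_ker, map_eq_zero_iff E hE]
  (ContinuousLinearEquiv.ofEq _ _ hker).trans
    (F.symm.submoduleMap (LinearMap.ker (B : M' →ₗ[R] N'))).symm

end kernels

section blockDiagonal

variable {X X' X₀ Y Y' Y₀ : Type*} [NormedAddCommGroup X] [NormedSpace ℝ X]
  [NormedAddCommGroup X'] [NormedSpace ℝ X'] [NormedAddCommGroup X₀] [NormedSpace ℝ X₀]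
  [NormedAddCommGroup Y] [NormedSpace ℝ Y] [NormedAddCommGroup Y'] [NormedSpace ℝ Y']
  [NormedAddCommGroup Y₀] [NormedSpace ℝ Y₀]

theorem mem_ker_blk_diag_iff (T : X →L[ℝ] X') (p : X × X₀) :
    p ∈ LinearMap.ker (blk T 0 0 (.id ℝ X₀) : X × X₀ →ₗ[ℝ] X' × X₀) ↔ T p.1 = 0 ∧ p.2 = 0 := by
  simp [LinearMap.mem_ker, blk]

noncomputable def kerBlkDiagEquiv (T : X →L[ℝ] X') :
    LinearMap.ker (blk T 0 0 (.id ℝ X₀) : X × X₀ →ₗ[ℝ] X' × X₀) ≃L[ℝ]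
      LinearMap.ker (T : X →ₗ[ℝ] X') :=
  .equivOfInverse
    ((ContinuousLinearMap.fst ℝ X X₀ ∘L Submodule.subtypeL _).codRestrict _
      fun p => ((mem_ker_blk_diag_iff T p.1).1 p.2).1)
    ((ContinuousLinearMap.inl ℝ X X₀ ∘L Submodule.subtypeL _).codRestrict _
      fun x => (mem_ker_blk_diag_iff T _).2 ⟨x.2, rfl⟩)
    (fun p => Subtype.ext (Prod.ext rfl ((mem_ker_blk_diag_iff T p.1).1 p.2).2.symm))
    (fun _ => rfl)

theorem nonempty_kerEquiv_of_blk_diag_eq (U : X →L[ℝ] X') (V : Y →L[ℝ] Y')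
    (E : Y' × Y₀ →L[ℝ] X' × X₀) (Einv : X' × X₀ →L[ℝ] Y' × Y₀)
    (F : X × X₀ →L[ℝ] Y × Y₀) (Finv : Y × Y₀ →L[ℝ] X × X₀)
    (hE : Einv ∘L E = .id ℝ (Y' × Y₀)) (hF₁ : F ∘L Finv = .id ℝ (Y × Y₀))
    (hF₂ : Finv ∘L F = .id ℝ (X × X₀))
    (h : blk U 0 0 (.id ℝ X₀) = E ∘L blk V 0 0 (.id ℝ Y₀) ∘L F) :
    Nonempty (LinearMap.ker (U : X →ₗ[ℝ] X') ≃L[ℝ] LinearMap.ker (V : Y →ₗ[ℝ] Y')) :=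
  have hE_inj : Function.Injective E :=
    Function.LeftInverse.injective (g := Einv) fun y => by simpa using congr($hE y)
  ⟨(kerBlkDiagEquiv U).symm.trans <|
    (kerEquivOfEqComp _ _ E hE_inj (.equivOfInverse' F Finv hF₁ hF₂) h).trans (kerBlkDiagEquiv V)⟩

end blockDiagonal

section prodAdjoint

open WithLp

variable {𝕜 X X₀ Y Y₀ Z Z₀ : Type*} [RCLike 𝕜]
  [NormedAddCommGroup X] [InnerProductSpace 𝕜 X] [CompleteSpace X]
  [NormedAddCommGroup X₀] [InnerProductSpace 𝕜 X₀] [CompleteSpace X₀]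
  [NormedAddCommGroup Y] [InnerProductSpace 𝕜 Y] [CompleteSpace Y]
  [NormedAddCommGroup Y₀] [InnerProductSpace 𝕜 Y₀] [CompleteSpace Y₀]
  [NormedAddCommGroup Z] [InnerProductSpace 𝕜 Z] [CompleteSpace Z]
  [NormedAddCommGroup Z₀] [InnerProductSpace 𝕜 Z₀] [CompleteSpace Z₀]

/-- The adjoint for the `L²` inner product `⟪x, y⟫ + ⟪x₀, y₀⟫` on the products, obtained through
`WithLp 2`: the product type `X × X₀` itself only carries the sup norm. -/
noncomputable def prodAdjoint (T : X × X₀ →L[𝕜] Y × Y₀) : Y × Y₀ →L[𝕜] X × X₀ :=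
  (prodContinuousLinearEquiv 2 𝕜 X X₀ : WithLp 2 (X × X₀) →L[𝕜] X × X₀) ∘L
    ((prodContinuousLinearEquiv 2 𝕜 Y Y₀).symm.toContinuousLinearMap ∘L T ∘L
      (prodContinuousLinearEquiv 2 𝕜 X X₀ : WithLp 2 (X × X₀) →L[𝕜] X × X₀)).adjoint ∘L
    (prodContinuousLinearEquiv 2 𝕜 Y Y₀).symm.toContinuousLinearMap

theorem prodAdjoint_comp (T : Y × Y₀ →L[𝕜] Z × Z₀) (S : X × X₀ →L[𝕜] Y × Y₀) :
    prodAdjoint (T ∘L S) = prodAdjoint S ∘L prodAdjoint T := by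
  have h : (prodContinuousLinearEquiv 2 𝕜 Z Z₀).symm.toContinuousLinearMap ∘L (T ∘L S) ∘L
        (prodContinuousLinearEquiv 2 𝕜 X X₀ : WithLp 2 (X × X₀) →L[𝕜] X × X₀) =
      ((prodContinuousLinearEquiv 2 𝕜 Z Z₀).symm.toContinuousLinearMap ∘L T ∘L
        (prodContinuousLinearEquiv 2 𝕜 Y Y₀ : WithLp 2 (Y × Y₀) →L[𝕜] Y × Y₀)) ∘L
      ((prodContinuousLinearEquiv 2 𝕜 Y Y₀).symm.toContinuousLinearMap ∘L S ∘L
        (prodContinuousLinearEquiv 2 𝕜 X X₀ : WithLp 2 (X × X₀) →L[𝕜] X × X₀)) := by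
    ext x; simp
  rw [prodAdjoint, h, ContinuousLinearMap.adjoint_comp]
  ext x <;> simp [prodAdjoint]

theorem prodAdjoint_id : prodAdjoint (.id 𝕜 (X × X₀)) = .id 𝕜 (X × X₀) := by
  ext x <;> simp [prodAdjoint, ContinuousLinearMap.adjoint_id]

end prodAdjoint

open WithLp in
theorem prodAdjoint_blk_diag {X X₀ Z : Type*}
    [NormedAddCommGroup X] [InnerProductSpace ℝ X] [CompleteSpace X]
    [NormedAddCommGroup X₀] [InnerProductSpace ℝ X₀] [CompleteSpace X₀]
    [NormedAddCommGroup Z] [InnerProductSpace ℝ Z] [CompleteSpace Z] (T : X →L[ℝ] Z) :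
    prodAdjoint (blk T 0 0 (.id ℝ X₀)) = blk T.adjoint 0 0 (.id ℝ X₀) := by
  have h : (prodContinuousLinearEquiv 2 ℝ X X₀).symm.toContinuousLinearMap ∘L
        blk T.adjoint 0 0 (.id ℝ X₀) ∘L
        (prodContinuousLinearEquiv 2 ℝ Z X₀ : WithLp 2 (Z × X₀) →L[ℝ] Z × X₀) =
      ((prodContinuousLinearEquiv 2 ℝ Z X₀).symm.toContinuousLinearMap ∘L
        blk T 0 0 (.id ℝ X₀) ∘L
        (prodContinuousLinearEquiv 2 ℝ X X₀ : WithLp 2 (X × X₀) →L[ℝ] X × X₀)).adjoint := by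
    rw [ContinuousLinearMap.eq_adjoint_iff]
    intro x y
    simp [blk, ContinuousLinearMap.adjoint_inner_left]
  rw [prodAdjoint, ← h]
  ext x <;> simp

theorem stmt16_general {X Y X₀ Y₀ : Type*}
    [NormedAddCommGroup X] [InnerProductSpace ℝ X] [CompleteSpace X]
    [NormedAddCommGroup Y] [InnerProductSpace ℝ Y] [CompleteSpace Y]
    [NormedAddCommGroup X₀] [InnerProductSpace ℝ X₀] [CompleteSpace X₀]
    [NormedAddCommGroup Y₀] [InnerProductSpace ℝ Y₀] [CompleteSpace Y₀]
    (U : X →L[ℝ] X) (V : Y →L[ℝ] Y)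
    (E : (Y × Y₀) →L[ℝ] (X × X₀)) (Einv : (X × X₀) →L[ℝ] (Y × Y₀))
    (F : (X × X₀) →L[ℝ] (Y × Y₀)) (Finv : (Y × Y₀) →L[ℝ] (X × X₀))
    (hE1 : E.comp Einv = ContinuousLinearMap.id ℝ (X × X₀))
    (hE2 : Einv.comp E = ContinuousLinearMap.id ℝ (Y × Y₀))
    (hF1 : F.comp Finv = ContinuousLinearMap.id ℝ (Y × Y₀))
    (hF2 : Finv.comp F = ContinuousLinearMap.id ℝ (X × X₀))
    (hEq : blk U 0 0 (ContinuousLinearMap.id ℝ X₀) =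
      E.comp ((blk V 0 0 (ContinuousLinearMap.id ℝ Y₀)).comp F)) :
    Nonempty (↥(LinearMap.ker (U : X →ₗ[ℝ] X)) ≃L[ℝ] ↥(LinearMap.ker (V : Y →ₗ[ℝ] Y))) ∧
    Nonempty (↥(LinearMap.ker ((ContinuousLinearMap.adjoint U : X →L[ℝ] X) : X →ₗ[ℝ] X)) ≃L[ℝ]
      ↥(LinearMap.ker ((ContinuousLinearMap.adjoint V : Y →L[ℝ] Y) : Y →ₗ[ℝ] Y))) := by
  refine ⟨nonempty_kerEquiv_of_blk_diag_eq U V E Einv F Finv hE2 hF1 hF2 hEq,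
    nonempty_kerEquiv_of_blk_diag_eq _ _ (prodAdjoint F) (prodAdjoint Finv) (prodAdjoint E)
      (prodAdjoint Einv) ?_ ?_ ?_ ?_⟩
  · rw [← prodAdjoint_comp, hF1, prodAdjoint_id]
  · rw [← prodAdjoint_comp, hE2, prodAdjoint_id]
  · rw [← prodAdjoint_comp, hE1, prodAdjoint_id]
  · rw [← prodAdjoint_blk_diag, ← prodAdjoint_blk_diag, hEq, prodAdjoint_comp, prodAdjoint_comp,
      ContinuousLinearMap.comp_assoc]

/-- Closed range Hilbert space operators that are equivalent after extension have isomorphic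
kernels and isomorphic cokernels. -/
theorem stmt16 {X Y X₀ Y₀ : Type*}
    [NormedAddCommGroup X] [InnerProductSpace ℝ X] [CompleteSpace X]
    [NormedAddCommGroup Y] [InnerProductSpace ℝ Y] [CompleteSpace Y]
    [NormedAddCommGroup X₀] [InnerProductSpace ℝ X₀] [CompleteSpace X₀]
    [NormedAddCommGroup Y₀] [InnerProductSpace ℝ Y₀] [CompleteSpace Y₀]
    (U : X →L[ℝ] X) (V : Y →L[ℝ] Y)
    (hU : IsClosed (Set.range U)) (hV : IsClosed (Set.range V))
    (E : (Y × Y₀) →L[ℝ] (X × X₀)) (Einv : (X × X₀) →L[ℝ] (Y × Y₀))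
    (F : (X × X₀) →L[ℝ] (Y × Y₀)) (Finv : (Y × Y₀) →L[ℝ] (X × X₀))
    (hE1 : E.comp Einv = ContinuousLinearMap.id ℝ (X × X₀))
    (hE2 : Einv.comp E = ContinuousLinearMap.id ℝ (Y × Y₀))
    (hF1 : F.comp Finv = ContinuousLinearMap.id ℝ (Y × Y₀))
    (hF2 : Finv.comp F = ContinuousLinearMap.id ℝ (X × X₀))
    (hEq : blk U 0 0 (ContinuousLinearMap.id ℝ X₀) =
      E.comp ((blk V 0 0 (ContinuousLinearMap.id ℝ Y₀)).comp F)) :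
    Nonempty (↥(LinearMap.ker (U : X →ₗ[ℝ] X)) ≃L[ℝ] ↥(LinearMap.ker (V : Y →ₗ[ℝ] Y))) ∧
    Nonempty (↥(LinearMap.ker ((ContinuousLinearMap.adjoint U : X →L[ℝ] X) : X →ₗ[ℝ] X)) ≃L[ℝ]
      ↥(LinearMap.ker ((ContinuousLinearMap.adjoint V : Y →L[ℝ] Y) : Y →ₗ[ℝ] Y))) :=
  stmt16_general U V E Einv F Finv hE1 hE2 hF1 hF2 hEq
end

section
/- Suppose U ⊕ I_{X₀} = E (V ⊕ I_{Y₀}) F with E, F invertible. Then F maps ker U ⊕ {0} ⊆ X ⊕ X₀ bijectively onto ker V ⊕ {0} ⊆ Y ⊕ Y₀; in particular the restriction of F induces an isomorphism from ker U onto ker V. -/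
open ContinuousLinearMap

/-! Since `E` is injective, `ker (U ⊕ I) = ker ((V ⊕ I) ∘ F)`, so `F` carries
`ker (U ⊕ I) = ker U × 0` onto `ker (V ⊕ I) = ker V × 0`. Identifying `p × 0` with `p` turns the
restriction of `F` into the isomorphism `ker U ≃ ker V`. -/

open Function

noncomputable def Submodule.prodBotEquiv {R M M₀ : Type*} [Semiring R] [TopologicalSpace M]
    [AddCommMonoid M] [Module R M] [TopologicalSpace M₀] [AddCommMonoid M₀] [Module R M₀]
    (p : Submodule R M) :
    p ≃L[R] p.prod (⊥ : Submodule R M₀) :=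
  .equivOfInverse
    ((ContinuousLinearMap.inl R M M₀).restrict fun x hx => by simpa using hx)
    ((ContinuousLinearMap.fst R M M₀).restrict fun _ hx => hx.1)
    (fun _ => rfl)
    fun ⟨(_, _), _, h⟩ => Subtype.ext <| Prod.ext rfl ((Submodule.mem_bot R).mp h).symm

theorem LinearEquiv.map_ker_of_eq_comp {R M M' N N' : Type*} [Semiring R]
    [AddCommMonoid M] [Module R M] [AddCommMonoid M'] [Module R M']
    [AddCommMonoid N] [Module R N] [AddCommMonoid N'] [Module R N']
    (e : M ≃ₗ[R] M') {A : M →ₗ[R] N} {B : M' →ₗ[R] N'} {E : N' →ₗ[R] N}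
    (hE : Injective E) (h : A = E ∘ₗ B ∘ₗ e) :
    (LinearMap.ker A).map (e : M →ₗ[R] M') = LinearMap.ker B := by
  rw [h, LinearMap.ker_comp_of_ker_eq_bot _ (LinearMap.ker_eq_bot_of_injective hE),
    LinearMap.ker_comp, Submodule.map_comap_eq_of_surjective e.surjective]

theorem ker_blk_zero_zero {X Y X' Y' : Type*} [NormedAddCommGroup X] [NormedSpace ℝ X]
    [NormedAddCommGroup Y] [NormedSpace ℝ Y] [NormedAddCommGroup X'] [NormedSpace ℝ X']
    [NormedAddCommGroup Y'] [NormedSpace ℝ Y'] (A : X →L[ℝ] X') (D : Y →L[ℝ] Y') :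
    LinearMap.ker (blk A 0 0 D : X × Y →ₗ[ℝ] X' × Y') =
      (LinearMap.ker (A : X →ₗ[ℝ] X')).prod (LinearMap.ker (D : Y →ₗ[ℝ] Y')) := by
  ext
  simp [blk]

theorem stmt17_general {X Y X₀ Y₀ : Type*} [NormedAddCommGroup X] [NormedSpace ℝ X]
    [NormedAddCommGroup Y] [NormedSpace ℝ Y]
    [NormedAddCommGroup X₀] [NormedSpace ℝ X₀]
    [NormedAddCommGroup Y₀] [NormedSpace ℝ Y₀]
    (U : X →L[ℝ] X) (V : Y →L[ℝ] Y)
    (E : (Y × Y₀) →L[ℝ] (X × X₀)) (Einv : (X × X₀) →L[ℝ] (Y × Y₀))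
    (F : (X × X₀) →L[ℝ] (Y × Y₀)) (Finv : (Y × Y₀) →L[ℝ] (X × X₀))
    (hE2 : Einv.comp E = ContinuousLinearMap.id ℝ (Y × Y₀))
    (hF1 : F.comp Finv = ContinuousLinearMap.id ℝ (Y × Y₀))
    (hF2 : Finv.comp F = ContinuousLinearMap.id ℝ (X × X₀))
    (hEq : blk U 0 0 (ContinuousLinearMap.id ℝ X₀) =
      E.comp ((blk V 0 0 (ContinuousLinearMap.id ℝ Y₀)).comp F)) :
    Set.BijOn F (((LinearMap.ker (U : X →ₗ[ℝ] X)).prod (⊥ : Submodule ℝ X₀) : Submodule ℝ (X × X₀)) : Set (X × X₀))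
      (((LinearMap.ker (V : Y →ₗ[ℝ] Y)).prod (⊥ : Submodule ℝ Y₀) : Submodule ℝ (Y × Y₀)) : Set (Y × Y₀)) ∧
    ∃ g : ↥(LinearMap.ker (U : X →ₗ[ℝ] X)) ≃L[ℝ] ↥(LinearMap.ker (V : Y →ₗ[ℝ] Y)),
      ∀ x : ↥(LinearMap.ker (U : X →ₗ[ℝ] X)), (g x : Y) = (F ((x : X), 0)).1 := by
  let e := ContinuousLinearEquiv.equivOfInverse' F Finv hF1 hF2
  have hE : Injective E := LeftInverse.injective fun y => congr($hE2 y)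
  have hker : ((LinearMap.ker (U : X →ₗ[ℝ] X)).prod ⊥).map (e : X × X₀ →ₗ[ℝ] Y × Y₀) =
      (LinearMap.ker (V : Y →ₗ[ℝ] Y)).prod ⊥ := by
    simpa only [ker_blk_zero_zero, ContinuousLinearMap.coe_id, LinearMap.ker_id] using
      e.toLinearEquiv.map_ker_of_eq_comp hE (congrArg ContinuousLinearMap.toLinearMap hEq)
  refine ⟨?_, (Submodule.prodBotEquiv _).trans
    ((e.ofSubmodules _ _ hker).trans (Submodule.prodBotEquiv _).symm), fun _ => rfl⟩
  rw [← hker, Submodule.map_coe]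
  exact e.injective.injOn.bijOn_image

/-- If `U ⊕ I = E (V ⊕ I) F` with `E, F` invertible, then `F` maps `ker U ⊕ {0}` bijectively
onto `ker V ⊕ {0}`, inducing an isomorphism from `ker U` onto `ker V`. -/
theorem stmt17 {X Y X₀ Y₀ : Type*} [NormedAddCommGroup X] [NormedSpace ℝ X] [CompleteSpace X]
    [NormedAddCommGroup Y] [NormedSpace ℝ Y] [CompleteSpace Y]
    [NormedAddCommGroup X₀] [NormedSpace ℝ X₀] [CompleteSpace X₀]
    [NormedAddCommGroup Y₀] [NormedSpace ℝ Y₀] [CompleteSpace Y₀]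
    (U : X →L[ℝ] X) (V : Y →L[ℝ] Y)
    (E : (Y × Y₀) →L[ℝ] (X × X₀)) (Einv : (X × X₀) →L[ℝ] (Y × Y₀))
    (F : (X × X₀) →L[ℝ] (Y × Y₀)) (Finv : (Y × Y₀) →L[ℝ] (X × X₀))
    (hE1 : E.comp Einv = ContinuousLinearMap.id ℝ (X × X₀))
    (hE2 : Einv.comp E = ContinuousLinearMap.id ℝ (Y × Y₀))
    (hF1 : F.comp Finv = ContinuousLinearMap.id ℝ (Y × Y₀))
    (hF2 : Finv.comp F = ContinuousLinearMap.id ℝ (X × X₀))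
    (hEq : blk U 0 0 (ContinuousLinearMap.id ℝ X₀) =
      E.comp ((blk V 0 0 (ContinuousLinearMap.id ℝ Y₀)).comp F)) :
    Set.BijOn F (((LinearMap.ker (U : X →ₗ[ℝ] X)).prod (⊥ : Submodule ℝ X₀) : Submodule ℝ (X × X₀)) : Set (X × X₀))
      (((LinearMap.ker (V : Y →ₗ[ℝ] Y)).prod (⊥ : Submodule ℝ Y₀) : Submodule ℝ (Y × Y₀)) : Set (Y × Y₀)) ∧
    ∃ g : ↥(LinearMap.ker (U : X →ₗ[ℝ] X)) ≃L[ℝ] ↥(LinearMap.ker (V : Y →ₗ[ℝ] Y)),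
      ∀ x : ↥(LinearMap.ker (U : X →ₗ[ℝ] X)), (g x : Y) = (F ((x : X), 0)).1 :=
  stmt17_general U V E Einv F Finv hE2 hF1 hF2 hEq
end

section
/- Let U be a bounded operator on a Hilbert space X and V a bounded operator on a Hilbert space Y, and suppose U and V are equivalent after one-sided extension: there exist a Hilbert space X₀ and invertible operators E : X ⊕ X₀ → X ⊕ X₀ and F : X ⊕ X₀ → Y such that E⁻¹ (U ⊕ I_{X₀}) = V F (as operators X ⊕ X₀ → Y composed appropriately; i.e., E⁻¹[[U,0],[0,I]] = V F). Then U and V are Schur coupled: with P : X ⊕ X₀ → X the canonical projection and J : X → X ⊕ X₀ the canonical embedding, the operator S = [[I_X, P F⁻¹],[E⁻¹J(I_X - U), E⁻¹F⁻¹]] on X ⊕ Y has invertible diagonal entries and U = A - BD⁻¹C, V = D - CA⁻¹B where S = [[A,B],[C,D]]. -/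
open ContinuousLinearMap

/-- Equivalence after one-sided extension implies Schur coupling, via the explicit
construction `S = [[I, PF⁻¹],[E⁻¹J(I-U), E⁻¹F⁻¹]]`. -/
theorem stmt18 {X Y X₀ : Type*}
    [NormedAddCommGroup X] [InnerProductSpace ℝ X] [CompleteSpace X]
    [NormedAddCommGroup Y] [InnerProductSpace ℝ Y] [CompleteSpace Y]
    [NormedAddCommGroup X₀] [InnerProductSpace ℝ X₀] [CompleteSpace X₀]
    (U : X →L[ℝ] X) (V : Y →L[ℝ] Y)
    (E : Y →L[ℝ] (X × X₀)) (E' : (X × X₀) →L[ℝ] Y)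
    (hE1 : E.comp E' = ContinuousLinearMap.id ℝ (X × X₀))
    (hE2 : E'.comp E = ContinuousLinearMap.id ℝ Y)
    (F : (X × X₀) →L[ℝ] Y) (F' : Y →L[ℝ] (X × X₀))
    (hF1 : F.comp F' = ContinuousLinearMap.id ℝ Y)
    (hF2 : F'.comp F = ContinuousLinearMap.id ℝ (X × X₀))
    (hEq : E'.comp (blk U 0 0 (ContinuousLinearMap.id ℝ X₀)) = V.comp F)
    (A : X →L[ℝ] X) (hA : A = ContinuousLinearMap.id ℝ X)
    (B : Y →L[ℝ] X) (hB : B = (ContinuousLinearMap.fst ℝ X X₀).comp F')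
    (C : X →L[ℝ] Y)
    (hC : C = E'.comp ((ContinuousLinearMap.inl ℝ X X₀).comp (ContinuousLinearMap.id ℝ X - U)))
    (D : Y →L[ℝ] Y) (hD : D = E'.comp F') :
    (∃ A' : X →L[ℝ] X, A.comp A' = ContinuousLinearMap.id ℝ X ∧
      A'.comp A = ContinuousLinearMap.id ℝ X ∧ V = D - C.comp (A'.comp B)) ∧
    (∃ D' : Y →L[ℝ] Y, D.comp D' = ContinuousLinearMap.id ℝ Y ∧
      D'.comp D = ContinuousLinearMap.id ℝ Y ∧ U = A - B.comp (D'.comp C)) := by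
  subst hA hB hC hD
  have hV : V = E'.comp ((blk U 0 0 (ContinuousLinearMap.id ℝ X₀)).comp F') := by
    calc V = (V.comp F).comp F' := by rw [comp_assoc, hF1, comp_id]
    _ = _ := by rw [← hEq, comp_assoc]
  constructor
  · refine ⟨ContinuousLinearMap.id ℝ X, by simp, by simp, ?_⟩
    rw [hV]
    ext y
    simp only [comp_apply, sub_apply, blk, coprod_apply, prod_apply,
      ContinuousLinearMap.zero_apply, ContinuousLinearMap.id_apply, inl_apply,
      ContinuousLinearMap.coe_fst', zero_add, add_zero, ← map_sub]
    congr 1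
    simp [Prod.ext_iff]
  · refine ⟨F.comp E, ?_, ?_, ?_⟩
    · calc (E'.comp F').comp (F.comp E) = E'.comp ((F'.comp F).comp E) := by
            rw [comp_assoc, comp_assoc]
      _ = _ := by rw [hF2, id_comp, hE2]
    · calc (F.comp E).comp (E'.comp F') = F.comp ((E.comp E').comp F') := by
            rw [comp_assoc, comp_assoc]
      _ = _ := by rw [hE1, id_comp, hF1]
    · ext x
      have h1 := fun v => congrFun (congrArg DFunLike.coe hE1) v
      have h2 := fun v => congrFun (congrArg DFunLike.coe hF2) v
      simp only [comp_apply, ContinuousLinearMap.id_apply] at h1 h2 ⊢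
      simp [h1, h2, sub_apply]
end
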